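/- arXiv:2601.18436 — 8 statements merged into one kernel-verified Lean document; each statement's English description precedes it below -/
import Mathlib

section
/- Let a_1, …, a_n be real numbers with a_1 + ⋯ + a_n = 0. Then ∑_{j=1}^{n} |a_j| ≥ √2 · (a_1² + ⋯ + a_n²)^{1/2}. -/
/-!
If the entries sum to zero, each `a i` is minus the sum of the others, so `2 |a i| ≤ S` where
`S = ∑ |a j|`. Hence `2 a i ^ 2 = |a i| * 2 |a i| ≤ |a i| * S`, and summing over `i` gives
`2 ∑ a i ^ 2 ≤ S ^ 2`.
-/

open Finset

theorem two_smul_abs_le_sum_abs_of_sum_eq_zero {ι G : Type*} [AddCommGroup G] [LinearOrder G]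
    [IsOrderedAddMonoid G] [DecidableEq ι] {s : Finset ι} {f : ι → G} (hf : ∑ j ∈ s, f j = 0)
    {i : ι} (hi : i ∈ s) : (2 : ℕ) • |f i| ≤ ∑ j ∈ s, |f j| := by
  have h_rest : f i = -∑ j ∈ s.erase i, f j :=
    eq_neg_of_add_eq_zero_left ((add_sum_erase s f hi).trans hf)
  have h_abs : |f i| ≤ ∑ j ∈ s.erase i, |f j| := by
    rw [h_rest, abs_neg]
    exact abs_sum_le_sum_abs f _
  calc (2 : ℕ) • |f i| = |f i| + |f i| := two_nsmul _
    _ ≤ |f i| + ∑ j ∈ s.erase i, |f j| := add_le_add_right h_abs _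
    _ = ∑ j ∈ s, |f j| := add_sum_erase s (fun j ↦ |f j|) hi

theorem two_mul_sum_sq_le_sq_sum_abs_of_sum_eq_zero {ι : Type*} {s : Finset ι} {f : ι → ℝ}
    (hf : ∑ j ∈ s, f j = 0) : 2 * ∑ j ∈ s, f j ^ 2 ≤ (∑ j ∈ s, |f j|) ^ 2 := by
  classical
  calc 2 * ∑ j ∈ s, f j ^ 2 = ∑ j ∈ s, |f j| * (2 * |f j|) := by
        rw [mul_sum]
        refine sum_congr rfl fun j _ ↦ ?_
        rw [← sq_abs]
        ring
    _ ≤ ∑ j ∈ s, |f j| * ∑ k ∈ s, |f k| := by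
        refine sum_le_sum fun j hj ↦ mul_le_mul_of_nonneg_left ?_ (abs_nonneg _)
        simpa using two_smul_abs_le_sum_abs_of_sum_eq_zero hf hj
    _ = (∑ j ∈ s, |f j|) ^ 2 := by rw [← sum_mul, sq]

theorem stmt_1 (n : ℕ) (a : Fin n → ℝ) (hsum : ∑ j, a j = 0) :
    ∑ j, |a j| ≥ Real.sqrt 2 * Real.sqrt (∑ j, (a j) ^ 2) := by
  rw [← Real.sqrt_mul zero_le_two, ge_iff_le,
    Real.sqrt_le_left (sum_nonneg fun j _ ↦ abs_nonneg (a j))]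
  exact two_mul_sum_sq_le_sq_sum_abs_of_sum_eq_zero hsum
end

section
/- Let n ≥ 3 be odd and let a_1, …, a_n be real numbers with a_1 + ⋯ + a_n = 0 and a_1² + ⋯ + a_n² = 1. Then ∑_{j=1}^{n} |a_j| ≤ √((n²−1)/n), and equality holds for the vector whose first (n−1)/2 coordinates equal √((n+1)/(n(n−1))) and whose last (n+1)/2 coordinates equal −√((n−1)/(n(n+1))). -/
open Finset

lemma sum_ite_range (n m : ℕ) (hmn : m ≤ n) (x y : ℝ) :
    ∑ i ∈ Finset.range n, (if i < m then x else y) = m * x + ((n : ℝ) - m) * y := by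
  rw [Finset.range_eq_Ico, ← Finset.sum_Ico_consecutive _ (Nat.zero_le m) hmn]
  rw [show ∑ i ∈ Finset.Ico 0 m, (if i < m then x else y) = ∑ _i ∈ Finset.Ico 0 m, x from
    Finset.sum_congr rfl fun i hi => by simp [(Finset.mem_Ico.mp hi).2]]
  rw [show ∑ i ∈ Finset.Ico m n, (if i < m then x else y) = ∑ _i ∈ Finset.Ico m n, y from
    Finset.sum_congr rfl fun i hi => by simp [Nat.not_lt.mpr (Finset.mem_Ico.mp hi).1]]
  simp [Nat.cast_sub hmn, mul_comm]

lemma aux3 (tv sv uv : ℝ) (ht : tv ≠ 0) (hs : sv ≠ 0) (hu : uv ≠ 0) :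
    tv ^ 2 / 2 * (sv / (uv * tv)) + sv ^ 2 / 2 * (tv / (uv * sv)) = tv * sv / uv := by
  field_simp
  ring

theorem stmt_3 (n : ℕ) (hn : 3 ≤ n) (hno : Odd n) (a : Fin n → ℝ)
    (hsum : ∑ j, a j = 0) (hnorm : ∑ j, (a j) ^ 2 = 1) :
    (∑ j, |a j| ≤ Real.sqrt (((n : ℝ) ^ 2 - 1) / n)) ∧
      (let b : Fin n → ℝ := fun j =>
        if (j : ℕ) < (n - 1) / 2 then Real.sqrt (((n : ℝ) + 1) / (n * ((n : ℝ) - 1)))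
        else -Real.sqrt (((n : ℝ) - 1) / (n * ((n : ℝ) + 1)))
      (∑ j, b j = 0) ∧ (∑ j, (b j) ^ 2 = 1) ∧
        ∑ j, |b j| = Real.sqrt (((n : ℝ) ^ 2 - 1) / n)) := by
  obtain ⟨m, hm⟩ := hno
  have hm1 : 1 ≤ m := by omega
  have hNc : (n : ℝ) = 2 * m + 1 := by exact_mod_cast congrArg (Nat.cast : ℕ → ℝ) hm
  have hN3 : (3 : ℝ) ≤ n := by exact_mod_cast hn
  have hNpos : (0 : ℝ) < n := by linarith
  have hsqnn : (0 : ℝ) ≤ ((n : ℝ) ^ 2 - 1) / n := by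
    apply div_nonneg _ hNpos.le; nlinarith
  constructor
  · -- main inequality
    classical
    set pos := Finset.univ.filter (fun j : Fin n => 0 < a j) with hposdef
    set neg := Finset.univ.filter (fun j : Fin n => ¬ 0 < a j) with hnegdef
    have hsplit : ∀ f : Fin n → ℝ, ∑ j, f j = ∑ j ∈ pos, f j + ∑ j ∈ neg, f j :=
      fun f => (Finset.sum_filter_add_sum_filter_not Finset.univ _ f).symm
    set P := ∑ j ∈ pos, a j with hPdef
    have hPneg : ∑ j ∈ neg, a j = -P := by have := hsplit a; rw [hsum] at this; linarith
    have habs : ∑ j, |a j| = 2 * P := by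
      rw [hsplit (fun j => |a j|)]
      have h1 : ∑ j ∈ pos, |a j| = P :=
        Finset.sum_congr rfl fun j hj => abs_of_pos (by simpa using (Finset.mem_filter.mp hj).2)
      have h2 : ∑ j ∈ neg, |a j| = P := by
        have : ∑ j ∈ neg, |a j| = ∑ j ∈ neg, -(a j) :=
          Finset.sum_congr rfl fun j hj => abs_of_nonpos
            (le_of_not_gt (by simpa using (Finset.mem_filter.mp hj).2))
        rw [this, Finset.sum_neg_distrib, hPneg, neg_neg]
      rw [h1, h2]; ring
    rw [habs]
    rcases le_or_gt P 0 with hP0 | hP0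
    · have : (0:ℝ) ≤ Real.sqrt (((n : ℝ) ^ 2 - 1) / n) := Real.sqrt_nonneg _
      linarith
    · -- P > 0
      have hposne : pos.Nonempty := by
        by_contra h
        rw [Finset.not_nonempty_iff_eq_empty] at h
        rw [hPdef, h, Finset.sum_empty] at hP0; exact lt_irrefl _ hP0
      have hnegne : neg.Nonempty := by
        by_contra h
        rw [Finset.not_nonempty_iff_eq_empty] at h
        rw [h, Finset.sum_empty] at hPneg; linarith
      set k := pos.card with hk
      set l := neg.card with hl
      have hkl : k + l = n := by
        rw [hk, hl, hposdef, hnegdef, Finset.card_filter_add_card_filter_not,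
          Finset.card_univ, Fintype.card_fin]
      have hk1 : 1 ≤ k := Finset.card_pos.mpr hposne
      have hl1 : 1 ≤ l := Finset.card_pos.mpr hnegne
      have hkne : k ≠ l := by omega
      -- 4 k l ≤ n^2 - 1 over ℝ
      have hkl4 : 4 * (k : ℝ) * l ≤ (n : ℝ) ^ 2 - 1 := by
        have h1 : (1 : ℤ) ≤ ((k : ℤ) - l) ^ 2 := by
          have hne : (k : ℤ) - l ≠ 0 := by
            intro h; apply hkne; exact_mod_cast sub_eq_zero.mp h
          nlinarith [Int.one_le_abs hne, sq_abs ((k : ℤ) - l), abs_nonneg ((k : ℤ) - l)]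
        have h2 : ((n:ℤ)) = (k : ℤ) + l := by exact_mod_cast hkl.symm
        have h3 : 4 * (k : ℤ) * l ≤ (n : ℤ) ^ 2 - 1 := by nlinarith
        exact_mod_cast h3
      set S1 := ∑ j ∈ pos, (a j) ^ 2 with hS1
      set S2 := ∑ j ∈ neg, (a j) ^ 2 with hS2
      have hS12 : S1 + S2 = 1 := by
        rw [hS1, hS2, ← hsplit (fun j => (a j) ^ 2), hnorm]
      have hS1nn : 0 ≤ S1 := Finset.sum_nonneg fun j _ => sq_nonneg _
      have hS2nn : 0 ≤ S2 := Finset.sum_nonneg fun j _ => sq_nonneg _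
      have hc1 : P ^ 2 ≤ (k : ℝ) * S1 := sq_sum_le_card_mul_sum_sq
      have hc2 : P ^ 2 ≤ (l : ℝ) * S2 := by
        have : (-P) ^ 2 ≤ (l : ℝ) * S2 := by
          rw [← hPneg]
          have := sq_sum_le_card_mul_sum_sq (s := neg) (f := a)
          exact this
        simpa using this
      have hkr : (1 : ℝ) ≤ k := by exact_mod_cast hk1
      have hlr : (1 : ℝ) ≤ l := by exact_mod_cast hl1
      have hklr : (k : ℝ) + l = n := by exact_mod_cast hkl
      have hP2 : (2 * P) ^ 2 ≤ ((n : ℝ) ^ 2 - 1) / n := by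
        rw [le_div_iff₀ hNpos]
        nlinarith [mul_le_mul_of_nonneg_left hc1 (by linarith : (0:ℝ) ≤ (l:ℝ)),
          mul_le_mul_of_nonneg_left hc2 (by linarith : (0:ℝ) ≤ (k:ℝ))]
      calc 2 * P = Real.sqrt ((2 * P) ^ 2) := (Real.sqrt_sq (by linarith)).symm
        _ ≤ Real.sqrt (((n : ℝ) ^ 2 - 1) / n) := Real.sqrt_le_sqrt hP2
  · -- equality case
    intro b
    have hmn : m ≤ n := by omega
    have hhalf : (n - 1) / 2 = m := by omega
    set x := Real.sqrt (((n : ℝ) + 1) / (n * ((n : ℝ) - 1))) with hx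
    set y := Real.sqrt (((n : ℝ) - 1) / (n * ((n : ℝ) + 1))) with hy
    have hN1 : (0 : ℝ) < (n : ℝ) - 1 := by linarith
    have hN1' : (0 : ℝ) < (n : ℝ) + 1 := by linarith
    set u := Real.sqrt (n : ℝ) with hu
    set s := Real.sqrt ((n : ℝ) + 1) with hs
    set t := Real.sqrt ((n : ℝ) - 1) with ht
    have hupos : 0 < u := Real.sqrt_pos.mpr hNpos
    have hspos : 0 < s := Real.sqrt_pos.mpr hN1'
    have htpos : 0 < t := Real.sqrt_pos.mpr hN1
    have hu2 : u ^ 2 = n := Real.sq_sqrt hNpos.le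
    have hs2 : s ^ 2 = (n : ℝ) + 1 := Real.sq_sqrt hN1'.le
    have ht2 : t ^ 2 = (n : ℝ) - 1 := Real.sq_sqrt hN1.le
    have hxval : x = s / (u * t) := by
      rw [hx, Real.sqrt_div hN1'.le, Real.sqrt_mul hNpos.le]
    have hyval : y = t / (u * s) := by
      rw [hy, Real.sqrt_div hN1.le, Real.sqrt_mul hNpos.le]
    have hx2 : x ^ 2 = ((n : ℝ) + 1) / (n * ((n : ℝ) - 1)) :=
      Real.sq_sqrt (by positivity)
    have hy2 : y ^ 2 = ((n : ℝ) - 1) / (n * ((n : ℝ) + 1)) :=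
      Real.sq_sqrt (by positivity)
    have hxpos : 0 < x := Real.sqrt_pos.mpr (by positivity)
    have hypos : 0 < y := Real.sqrt_pos.mpr (by positivity)
    have hrhs : Real.sqrt (((n : ℝ) ^ 2 - 1) / n) = t * s / u := by
      rw [show ((n : ℝ) ^ 2 - 1) = ((n : ℝ) - 1) * ((n : ℝ) + 1) by ring,
        Real.sqrt_div (by positivity), Real.sqrt_mul hN1.le]
    have hmc : (m : ℝ) = ((n : ℝ) - 1) / 2 := by rw [hNc]; ring
    have key : ∀ c d : ℝ, ∑ j : Fin n, (if (j : ℕ) < (n - 1) / 2 then c else d)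
        = m * c + (m + 1) * d := by
      intro c d
      rw [Fin.sum_univ_eq_sum_range (fun i => if i < (n - 1) / 2 then c else d) n,
        hhalf, sum_ite_range n m hmn c d, hNc]
      ring
    have hmt : (m : ℝ) = t ^ 2 / 2 := by rw [ht2, hmc]
    have hms : t ^ 2 / 2 + 1 = s ^ 2 / 2 := by rw [hs2, ht2]; ring
    refine ⟨?_, ?_, ?_⟩
    · rw [show ∑ j : Fin n, b j = ∑ j : Fin n,
          (if (j : ℕ) < (n - 1) / 2 then x else -y) from rfl, key x (-y),
        hxval, hyval, hmt, hms]
      field_simp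
      ring
    · rw [show ∑ j : Fin n, (b j) ^ 2 = ∑ j : Fin n,
          (if (j : ℕ) < (n - 1) / 2 then x ^ 2 else y ^ 2) from
        Finset.sum_congr rfl fun j _ => by by_cases h : (j : ℕ) < (n - 1) / 2 <;>
          simp [b, h, hx, hy],
        key (x ^ 2) (y ^ 2), hx2, hy2, hmc]
      field_simp
      ring
    · rw [show ∑ j : Fin n, |b j| = ∑ j : Fin n,
          (if (j : ℕ) < (n - 1) / 2 then x else y) from
        Finset.sum_congr rfl fun j _ => by by_cases h : (j : ℕ) < (n - 1) / 2 <;>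
          simp [b, h, hx, hy, abs_of_pos hxpos, abs_of_pos hypos],
        key x y, hrhs, hxval, hyval, hmt, hms]
      exact aux3 t s u htpos.ne' hspos.ne' hupos.ne'
end

section
/- Let n ≥ 2, let 1 ≤ k ≤ n−1, and let a_1, …, a_n be real numbers with a_1 + ⋯ + a_n = 0, a_1² + ⋯ + a_n² = 1, such that a_i ≥ 0 for i ≤ k and a_i ≤ 0 for i > k. Then ∑_{i=1}^{n} |a_i| ≤ 2√(k(n−k)/n). -/
/-!
Let `S` be the total mass of the positive entries; since the entries sum to zero, `S` is also
the mass of the negative ones and `∑ |aᵢ| = 2S`. Cauchy–Schwarz on each sign class gives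
`S² ≤ k A` and `S² ≤ (n - k) B`, where `A + B = 1` are the squared masses of the two classes;
eliminating `A` gives `n S² ≤ k (n - k)`.
-/

open Finset

lemma add_mul_sq_le_mul_mul_add {S A B k m : ℝ} (hk : 0 ≤ k) (hm : 0 ≤ m)
    (hA : S ^ 2 ≤ k * A) (hB : S ^ 2 ≤ m * B) : (k + m) * S ^ 2 ≤ k * m * (A + B) := by
  nlinarith [mul_le_mul_of_nonneg_left hA hm, mul_le_mul_of_nonneg_left hB hk]

section SignSplit

variable {ι : Type*} [Fintype ι] [DecidableEq ι] {a : ι → ℝ} {s : Finset ι}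

lemma sum_compl_eq_neg_of_sum_eq_zero (hsum : ∑ i, a i = 0) :
    ∑ i ∈ sᶜ, a i = -∑ i ∈ s, a i := by
  linarith [sum_add_sum_compl s a]

lemma sum_abs_eq_two_mul_sum_of_sign_split (hsum : ∑ i, a i = 0)
    (hs : ∀ i ∈ s, 0 ≤ a i) (hsc : ∀ i ∉ s, a i ≤ 0) :
    ∑ i, |a i| = 2 * ∑ i ∈ s, a i := by
  have hpos : ∑ i ∈ s, |a i| = ∑ i ∈ s, a i :=
    sum_congr rfl fun i hi => abs_of_nonneg (hs i hi)
  have hneg : ∑ i ∈ sᶜ, |a i| = -∑ i ∈ sᶜ, a i := by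
    rw [← sum_neg_distrib]
    exact sum_congr rfl fun i hi => abs_of_nonpos (hsc i (mem_compl.mp hi))
  rw [← sum_add_sum_compl s, hpos, hneg, sum_compl_eq_neg_of_sum_eq_zero hsum]
  ring

theorem card_mul_sq_sum_abs_le_of_sign_split (hsum : ∑ i, a i = 0)
    (hs : ∀ i ∈ s, 0 ≤ a i) (hsc : ∀ i ∉ s, a i ≤ 0) :
    Fintype.card ι * (∑ i, |a i|) ^ 2 ≤ 4 * (#s * #sᶜ) * ∑ i, a i ^ 2 := by
  have hcs : (∑ i ∈ s, a i) ^ 2 ≤ #s * ∑ i ∈ s, a i ^ 2 := sq_sum_le_card_mul_sum_sq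
  have hcsc : (∑ i ∈ s, a i) ^ 2 ≤ #sᶜ * ∑ i ∈ sᶜ, a i ^ 2 := by
    simpa [sum_compl_eq_neg_of_sum_eq_zero hsum] using
      sq_sum_le_card_mul_sum_sq (s := sᶜ) (f := a)
  have hcard : (Fintype.card ι : ℝ) = #s + #sᶜ := by
    rw [← Nat.cast_add, card_add_card_compl]
  rw [sum_abs_eq_two_mul_sum_of_sign_split hsum hs hsc, hcard, ← sum_add_sum_compl s]
  linear_combination 4 * add_mul_sq_le_mul_mul_add (Nat.cast_nonneg _) (Nat.cast_nonneg _) hcs hcsc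

end SignSplit

theorem stmt_4_general (n k : ℕ) (hn : 2 ≤ n) (hk2 : k ≤ n - 1) (a : Fin n → ℝ)
    (hsum : ∑ j, a j = 0) (hnorm : ∑ j, (a j) ^ 2 = 1)
    (hpos : ∀ i : Fin n, (i : ℕ) < k → 0 ≤ a i)
    (hneg : ∀ i : Fin n, k ≤ (i : ℕ) → a i ≤ 0) :
    ∑ j, |a j| ≤ 2 * Real.sqrt ((k * (n - k) : ℝ) / n) := by
  set s : Finset (Fin n) := {i | (i : ℕ) < k}
  have hs : #s = k := by rw [Fin.card_filter_val_lt]; omega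
  have hsc : (#sᶜ : ℝ) = n - k := by
    rw [card_compl, Fintype.card_fin, hs, Nat.cast_sub (by omega)]
  have key := card_mul_sq_sum_abs_le_of_sign_split (s := s) hsum
    (fun i hi => hpos i (by simpa [s] using hi))
    (fun i hi => hneg i (by simpa [s] using hi))
  rw [Fintype.card_fin, hnorm, hsc, hs, mul_one] at key
  have hn0 : (0 : ℝ) < n := by exact_mod_cast (by omega : 0 < n)
  rw [← Real.sqrt_sq (by norm_num : (0 : ℝ) ≤ 2), ← Real.sqrt_mul (sq_nonneg _)]
  refine Real.le_sqrt_of_sq_le ?_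
  rw [mul_div_assoc', le_div_iff₀ hn0]
  linarith

theorem stmt_4 (n k : ℕ) (hn : 2 ≤ n) (hk1 : 1 ≤ k) (hk2 : k ≤ n - 1) (a : Fin n → ℝ)
    (hsum : ∑ j, a j = 0) (hnorm : ∑ j, (a j) ^ 2 = 1)
    (hpos : ∀ i : Fin n, (i : ℕ) < k → 0 ≤ a i)
    (hneg : ∀ i : Fin n, k ≤ (i : ℕ) → a i ≤ 0) :
    ∑ j, |a j| ≤ 2 * Real.sqrt ((k * (n - k) : ℝ) / n) :=
  stmt_4_general n k hn hk2 a hsum hnorm hpos hneg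
end

section
/- Let n ≥ 1 and let a ∈ ℝ^{n+1} be a nonzero vector with ∑_{j=1}^{n+1} a_j = 0. Then the gauge (Minkowski functional) of the difference body DΔ_n = Δ_n − Δ_n evaluated at a, namely g(DΔ_n, a) = inf{ρ > 0 : a ∈ ρ·(Δ_n − Δ_n)}, equals (1/2) ∑_{j=1}^{n+1} |a_j|. -/
/-!
If `a = s • (y - z)` with `y, z` in the simplex, then `∑ |aᵢ| ≤ s ∑ (yᵢ + zᵢ) = 2s`, so the gauge
is at least `t = ½ ∑ |aᵢ|`. Conversely, when `∑ aᵢ = 0` the positive and negative parts of `a`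
both have total mass `t`, so `a = a⁺ - a⁻ = t • (a⁺/t - a⁻/t)` is attained with `s = t`.
-/

open Finset Pointwise

section
variable {ι : Type*} [Fintype ι]

lemma sum_abs_pos_of_ne_zero {a : ι → ℝ} (ha : a ≠ 0) : 0 < ∑ i, |a i| := by
  obtain ⟨i, hi⟩ := Function.ne_iff.1 ha
  exact sum_pos' (fun j _ => abs_nonneg (a j)) ⟨i, mem_univ i, abs_pos.2 hi⟩

lemma sum_abs_sub_le_two_of_mem_stdSimplex {y z : ι → ℝ} (hy : y ∈ stdSimplex ℝ ι)
    (hz : z ∈ stdSimplex ℝ ι) : ∑ i, |y i - z i| ≤ 2 :=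
  calc ∑ i, |y i - z i| ≤ ∑ i, (y i + z i) := sum_le_sum fun i _ => by
        simpa only [abs_of_nonneg (hy.1 i), abs_of_nonneg (hz.1 i)] using abs_sub (y i) (z i)
    _ = 2 := by rw [sum_add_distrib, hy.2, hz.2]; norm_num

lemma sum_abs_le_of_mem_smul_stdSimplex_sub_stdSimplex {a : ι → ℝ} {r : ℝ} (hr : 0 ≤ r)
    (ha : a ∈ r • (stdSimplex ℝ ι - stdSimplex ℝ ι)) : ∑ i, |a i| ≤ 2 * r := by
  obtain ⟨_, ⟨y, hy, z, hz, rfl⟩, rfl⟩ := ha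
  calc ∑ i, |(r • (y - z)) i| = r * ∑ i, |y i - z i| := by
        simp only [Pi.smul_apply, Pi.sub_apply, smul_eq_mul, abs_mul, abs_of_nonneg hr, mul_sum]
    _ ≤ r * 2 := mul_le_mul_of_nonneg_left (sum_abs_sub_le_two_of_mem_stdSimplex hy hz) hr
    _ = 2 * r := mul_comm r 2

lemma inv_sum_smul_mem_stdSimplex {x : ι → ℝ} (hx : 0 ≤ x) (hs : ∑ i, x i ≠ 0) :
    (∑ i, x i)⁻¹ • x ∈ stdSimplex ℝ ι :=
  ⟨fun i => smul_nonneg (inv_nonneg.2 (sum_nonneg fun j _ => hx j)) (hx i), by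
    simp only [Pi.smul_apply, smul_eq_mul, ← mul_sum, inv_mul_cancel₀ hs]⟩

lemma sum_posPart_and_sum_negPart_eq_half_sum_abs {a : ι → ℝ} (hsum : ∑ i, a i = 0) :
    ∑ i, a⁺ i = (1 / 2) * ∑ i, |a i| ∧ ∑ i, a⁻ i = (1 / 2) * ∑ i, |a i| := by
  have hsub : ∑ i, a⁺ i - ∑ i, a⁻ i = 0 :=
    calc ∑ i, a⁺ i - ∑ i, a⁻ i = ∑ i, (a⁺ - a⁻) i := (sum_sub_distrib _ _).symm
      _ = 0 := by rw [posPart_sub_negPart, hsum]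
  have hadd : ∑ i, a⁺ i + ∑ i, a⁻ i = ∑ i, |a i| :=
    calc ∑ i, a⁺ i + ∑ i, a⁻ i = ∑ i, (a⁺ + a⁻) i := sum_add_distrib.symm
      _ = ∑ i, |a i| := by rw [posPart_add_negPart]; rfl
  constructor <;> linarith

lemma mem_smul_stdSimplex_sub_stdSimplex {a : ι → ℝ} (hsum : ∑ i, a i = 0) (ha : a ≠ 0) :
    a ∈ ((1 / 2) * ∑ i, |a i|) • (stdSimplex ℝ ι - stdSimplex ℝ ι) := by
  obtain ⟨hpos, hneg⟩ := sum_posPart_and_sum_negPart_eq_half_sum_abs hsum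
  have ht : (1 / 2) * ∑ i, |a i| ≠ 0 := by positivity [sum_abs_pos_of_ne_zero ha]
  refine ⟨_, Set.sub_mem_sub (inv_sum_smul_mem_stdSimplex (posPart_nonneg a) (hpos ▸ ht))
    (inv_sum_smul_mem_stdSimplex (negPart_nonneg a) (hneg ▸ ht)), ?_⟩
  dsimp only
  rw [hpos, hneg, ← smul_sub, smul_inv_smul₀ ht, posPart_sub_negPart]

theorem gauge_stdSimplex_sub_stdSimplex {a : ι → ℝ} (hsum : ∑ i, a i = 0) :
    gauge (stdSimplex ℝ ι - stdSimplex ℝ ι) a = (1 / 2) * ∑ i, |a i| := by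
  rcases eq_or_ne a 0 with rfl | ha
  · simp [gauge_zero]
  have hpos : 0 < (1 / 2) * ∑ i, |a i| := by positivity [sum_abs_pos_of_ne_zero ha]
  have hmem := mem_smul_stdSimplex_sub_stdSimplex hsum ha
  refine le_antisymm (gauge_le_of_mem hpos.le hmem) ?_
  rw [gauge_def]
  exact le_csInf ⟨_, hpos, hmem⟩ fun r ⟨hr, har⟩ => by
    linarith [sum_abs_le_of_mem_smul_stdSimplex_sub_stdSimplex hr.le har]

end

theorem stmt_9_general (n : ℕ) (a : Fin (n + 1) → ℝ)
    (hsum : ∑ j, a j = 0) :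
    gauge
        ({x : Fin (n + 1) → ℝ | (∀ j, 0 ≤ x j) ∧ ∑ j, x j = 1} -
          {x : Fin (n + 1) → ℝ | (∀ j, 0 ≤ x j) ∧ ∑ j, x j = 1}) a =
      (1 / 2) * ∑ j, |a j| :=
  gauge_stdSimplex_sub_stdSimplex hsum

theorem stmt_9 (n : ℕ) (hn : 1 ≤ n) (a : Fin (n + 1) → ℝ) (ha : a ≠ 0)
    (hsum : ∑ j, a j = 0) :
    gauge
        ({x : Fin (n + 1) → ℝ | (∀ j, 0 ≤ x j) ∧ ∑ j, x j = 1} -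
          {x : Fin (n + 1) → ℝ | (∀ j, 0 ≤ x j) ∧ ∑ j, x j = 1}) a =
      (1 / 2) * ∑ j, |a j| :=
  stmt_9_general n a hsum
end

section
/- Let n ≥ 1. The minimum of the width of Δ_n over all unit vectors a ∈ ℝ^{n+1} with ∑_{j=1}^{n+1} a_j = 0, i.e. the infimum over such a of ( sup_{x ∈ Δ_n} ⟨x, a⟩ − inf_{x ∈ Δ_n} ⟨x, a⟩ ), equals 2/√(n+1) if n is odd, and equals 2√((n+1)/(n(n+2))) if n is even. -/
open Finset

noncomputable def simplexSet (n : ℕ) : Set (Fin (n + 1) → ℝ) :=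
  {x | (∀ j, 0 ≤ x j) ∧ ∑ j, x j = 1}

noncomputable def simplexWidth (n : ℕ) (a : Fin (n + 1) → ℝ) : ℝ :=
  sSup ((fun x => ∑ j, x j * a j) '' simplexSet n) -
    sInf ((fun x => ∑ j, x j * a j) '' simplexSet n)

lemma simplex_isGreatest (n : ℕ) (a : Fin (n+1) → ℝ) :
    IsGreatest ((fun x => ∑ j, x j * a j) '' simplexSet n)
      (univ.sup' univ_nonempty a) := by
  constructor
  · obtain ⟨j₀, -, hj₀⟩ := Finset.exists_mem_eq_sup' univ_nonempty a
    refine ⟨Pi.single j₀ 1, ⟨fun j => ?_, ?_⟩, ?_⟩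
    · rcases eq_or_ne j j₀ with h | h <;> simp [Pi.single_apply, h]
    · simp [Pi.single_apply]
    · simp [Pi.single_apply, ite_mul, hj₀]
  · rintro y ⟨x, ⟨hx0, hx1⟩, rfl⟩
    calc ∑ j, x j * a j ≤ ∑ j, x j * univ.sup' univ_nonempty a :=
          Finset.sum_le_sum fun j _ =>
            mul_le_mul_of_nonneg_left (Finset.le_sup' a (mem_univ j)) (hx0 j)
      _ = univ.sup' univ_nonempty a := by rw [← Finset.sum_mul, hx1, one_mul]

lemma simplex_isLeast (n : ℕ) (a : Fin (n+1) → ℝ) :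
    IsLeast ((fun x => ∑ j, x j * a j) '' simplexSet n)
      (univ.inf' univ_nonempty a) := by
  constructor
  · obtain ⟨j₀, -, hj₀⟩ := Finset.exists_mem_eq_inf' univ_nonempty a
    refine ⟨Pi.single j₀ 1, ⟨fun j => ?_, ?_⟩, ?_⟩
    · rcases eq_or_ne j j₀ with h | h <;> simp [Pi.single_apply, h]
    · simp [Pi.single_apply]
    · simp [Pi.single_apply, ite_mul, hj₀]
  · rintro y ⟨x, ⟨hx0, hx1⟩, rfl⟩
    calc univ.inf' univ_nonempty a
        = ∑ j, x j * univ.inf' univ_nonempty a := by rw [← Finset.sum_mul, hx1, one_mul]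
      _ ≤ ∑ j, x j * a j :=
          Finset.sum_le_sum fun j _ =>
            mul_le_mul_of_nonneg_left (Finset.inf'_le a (mem_univ j)) (hx0 j)

lemma simplexWidth_eq (n : ℕ) (a : Fin (n+1) → ℝ) :
    simplexWidth n a = univ.sup' univ_nonempty a - univ.inf' univ_nonempty a := by
  rw [simplexWidth, (simplex_isGreatest n a).csSup_eq,
    (simplex_isLeast n a).csInf_eq]

lemma sum_ite_val (N m : ℕ) (h : m ≤ N) (c d : ℝ) :
    ∑ j : Fin N, (if (j:ℕ) < m then c else d) = m * c + ((N - m : ℕ) : ℝ) * d := by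
  rw [Fin.sum_univ_eq_sum_range (fun k => if k < m then c else d) N, Finset.sum_ite]
  have h1 : (range N).filter (fun k => k < m) = range m := by
    ext k; simp only [mem_filter, mem_range]; omega
  have h2 : (range N).filter (fun k => ¬ k < m) = Ico m N := by
    ext k; simp only [mem_filter, mem_range, mem_Ico]; omega
  rw [h1, h2]
  simp [Nat.card_Ico, mul_comm]

lemma construct (n p q : ℕ) (hp : 0 < p) (hq : 0 < q) (hpq : p + q = n + 1)
    (t1 t2 : ℝ) (ht1 : 0 ≤ t1) (ht2 : 0 ≤ t2)
    (hsum : (p:ℝ) * t1 = q * t2) (hsq : (p:ℝ) * t1^2 + q * t2^2 = 1) :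
    ∃ a : Fin (n+1) → ℝ,
      (∑ j, a j ^ 2 = 1) ∧ (∑ j, a j = 0) ∧ simplexWidth n a = t1 + t2 := by
  have hpN : p ≤ n + 1 := by omega
  have hq' : ((n + 1 - p : ℕ) : ℝ) = q := by
    have : (n + 1 - p : ℕ) = q := by omega
    rw [this]
  refine ⟨fun j => if (j:ℕ) < p then t1 else -t2, ?_, ?_, ?_⟩
  · have key : ∀ j : Fin (n+1),
        (if (j:ℕ) < p then t1 else -t2)^2 = if (j:ℕ) < p then t1^2 else t2^2 := by
      intro j; split <;> ring
    rw [Finset.sum_congr rfl (fun j _ => key j), sum_ite_val _ _ hpN, hq']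
    exact hsq
  · rw [sum_ite_val _ _ hpN, hq']; linarith [hsum]
  · rw [simplexWidth_eq]
    have hs : univ.sup' univ_nonempty (fun j : Fin (n+1) => if (j:ℕ) < p then t1 else -t2) = t1 := by
      apply le_antisymm
      · exact Finset.sup'_le _ _ (fun j _ => by split; exacts [le_rfl, by linarith])
      · have h0 : ((⟨0, by omega⟩ : Fin (n+1)) : ℕ) < p := hp
        have := Finset.le_sup' (fun j : Fin (n+1) => if (j:ℕ) < p then t1 else -t2)
          (mem_univ (⟨0, by omega⟩ : Fin (n+1)))
        simpa only [h0, ↓reduceIte] using this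
    have hi : univ.inf' univ_nonempty (fun j : Fin (n+1) => if (j:ℕ) < p then t1 else -t2) = -t2 := by
      apply le_antisymm
      · have hn0 : ¬ ((⟨n, by omega⟩ : Fin (n+1)) : ℕ) < p := by simp; omega
        have := Finset.inf'_le (fun j : Fin (n+1) => if (j:ℕ) < p then t1 else -t2)
          (mem_univ (⟨n, by omega⟩ : Fin (n+1)))
        simpa only [hn0, ↓reduceIte] using this
      · exact Finset.le_inf' _ _ (fun j _ => by split; exacts [by linarith, le_rfl])
    rw [hs, hi]; ring

lemma max_sq_split (x : ℝ) : x^2 = (max x 0)^2 + (max (-x) 0)^2 := by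
  rcases le_total 0 x with h | h
  · rw [max_eq_left h, max_eq_right (by linarith : -x ≤ 0)]; ring
  · rw [max_eq_right h, max_eq_left (by linarith : 0 ≤ -x)]; ring

lemma lower_sq (N : ℕ) (a : Fin N → ℝ) (hne : (univ : Finset (Fin N)).Nonempty)
    (h2 : ∑ j, a j ^ 2 = 1) (h1 : ∑ j, a j = 0) (D : ℝ)
    (hD : ∀ p q : ℕ, p + q = N → (p : ℝ) * q ≤ D) :
    (N : ℝ) ≤ D * (univ.sup' hne a - univ.inf' hne a) ^ 2 := by
  set M := univ.sup' hne a with hM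
  set m := univ.inf' hne a with hm
  have hNpos : 0 < N := hne.choose.pos
  have hMle : ∀ j, a j ≤ M := fun j => Finset.le_sup' a (mem_univ j)
  have hmle : ∀ j, m ≤ a j := fun j => Finset.inf'_le a (mem_univ j)
  have hM0 : 0 ≤ M := by
    by_contra h
    push_neg at h
    have : ∑ j, a j < ∑ j : Fin N, (0:ℝ) :=
      Finset.sum_lt_sum_of_nonempty hne (fun j _ => lt_of_le_of_lt (hMle j) h)
    simp [h1] at this
  have hm0 : m ≤ 0 := by
    by_contra h
    push_neg at h
    have : ∑ j : Fin N, (0:ℝ) < ∑ j, a j :=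
      Finset.sum_lt_sum_of_nonempty hne (fun j _ => lt_of_lt_of_le h (hmle j))
    simp [h1] at this
  set P := ∑ j, max (a j) 0 with hP
  set Q := ∑ j, max (-a j) 0 with hQ
  have hPQ : P = Q := by
    have : P - Q = ∑ j, a j := by
      rw [hP, hQ, ← Finset.sum_sub_distrib]
      exact Finset.sum_congr rfl fun j _ => by
        rcases le_total 0 (a j) with h | h
        · rw [max_eq_left h, max_eq_right (by linarith : -a j ≤ 0)]; ring
        · rw [max_eq_right h, max_eq_left (by linarith : 0 ≤ -a j)]; ring
    have := this.trans h1
    linarith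
  have hP0 : 0 ≤ P := Finset.sum_nonneg fun j _ => le_max_right _ _
  have h1w : 1 ≤ (M - m) * P := by
    have hb1 : ∑ j, (max (a j) 0)^2 ≤ M * P := by
      rw [hP, Finset.mul_sum]
      exact Finset.sum_le_sum fun j _ => by
        have h1 : max (a j) 0 ≤ M := max_le (hMle j) hM0
        have h2 : 0 ≤ max (a j) 0 := le_max_right _ _
        nlinarith
    have hb2 : ∑ j, (max (-a j) 0)^2 ≤ (-m) * Q := by
      rw [hQ, Finset.mul_sum]
      exact Finset.sum_le_sum fun j _ => by
        have h1 : max (-a j) 0 ≤ -m := max_le (by linarith [hmle j]) (by linarith)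
        have h2 : 0 ≤ max (-a j) 0 := le_max_right _ _
        nlinarith
    have hsplit : (1:ℝ) = ∑ j, (max (a j) 0)^2 + ∑ j, (max (-a j) 0)^2 := by
      rw [← Finset.sum_add_distrib, ← h2]
      exact Finset.sum_congr rfl fun j _ => max_sq_split (a j)
    rw [hPQ] at *
    nlinarith
  set p := (univ.filter (fun j : Fin N => 0 < a j)).card with hp
  set q := (univ.filter (fun j : Fin N => a j < 0)).card with hq
  have hdisj : Disjoint (univ.filter (fun j : Fin N => 0 < a j))
      (univ.filter (fun j : Fin N => a j < 0)) := by
    rw [Finset.disjoint_left]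
    intro j hj1 hj2
    simp only [mem_filter] at hj1 hj2
    linarith [hj1.2, hj2.2]
  have hpq : p + q ≤ N := by
    have := Finset.card_le_univ ((univ.filter (fun j : Fin N => 0 < a j)) ∪
      (univ.filter (fun j : Fin N => a j < 0)))
    rw [Finset.card_union_of_disjoint hdisj] at this
    simpa using this
  set p' := N - q with hp'
  have hp'q : p' + q = N := by omega
  have hPpM : P ≤ (p' : ℝ) * M := by
    have step1 : P ≤ (p : ℝ) * M := by
      have : P = ∑ j ∈ univ.filter (fun j : Fin N => 0 < a j), a j := by
        rw [hP, Finset.sum_filter]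
        exact Finset.sum_congr rfl fun j _ => by
          rcases lt_or_ge 0 (a j) with h | h
          · rw [if_pos h, max_eq_left h.le]
          · rw [if_neg (not_lt.mpr h), max_eq_right h]
      rw [this]
      calc ∑ j ∈ univ.filter (fun j : Fin N => 0 < a j), a j
          ≤ ∑ j ∈ univ.filter (fun j : Fin N => 0 < a j), M :=
            Finset.sum_le_sum fun j _ => hMle j
        _ = (p : ℝ) * M := by rw [Finset.sum_const, nsmul_eq_mul]
    have hple : (p : ℝ) ≤ (p' : ℝ) := by
      have : p ≤ p' := by omega
      exact_mod_cast this
    nlinarith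
  have hQqm : P ≤ (q : ℝ) * (-m) := by
    rw [hPQ]
    have : Q = ∑ j ∈ univ.filter (fun j : Fin N => a j < 0), -a j := by
      rw [hQ, Finset.sum_filter]
      exact Finset.sum_congr rfl fun j _ => by
        rcases lt_or_ge (a j) 0 with h | h
        · rw [if_pos h, max_eq_left (by linarith)]
        · rw [if_neg (not_lt.mpr h), max_eq_right (by linarith)]
    rw [this]
    calc ∑ j ∈ univ.filter (fun j : Fin N => a j < 0), -a j
        ≤ ∑ j ∈ univ.filter (fun j : Fin N => a j < 0), -m :=
          Finset.sum_le_sum fun j _ => by linarith [hmle j]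
      _ = (q : ℝ) * (-m) := by rw [Finset.sum_const, nsmul_eq_mul]
  have hNP : (N : ℝ) * P ≤ (p' : ℝ) * q * (M - m) := by
    have hcast : (p' : ℝ) + q = N := by exact_mod_cast hp'q
    have e1 : (q : ℝ) * P ≤ q * ((p' : ℝ) * M) :=
      mul_le_mul_of_nonneg_left hPpM (Nat.cast_nonneg q)
    have e2 : (p' : ℝ) * P ≤ p' * ((q : ℝ) * (-m)) :=
      mul_le_mul_of_nonneg_left hQqm (Nat.cast_nonneg p')
    nlinarith
  have hw0 : 0 ≤ M - m := by linarith
  calc (N : ℝ) = N * 1 := by ring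
    _ ≤ N * ((M - m) * P) := by
        have : (0:ℝ) ≤ N := Nat.cast_nonneg N
        nlinarith
    _ = (M - m) * ((N : ℝ) * P) := by ring
    _ ≤ (M - m) * ((p' : ℝ) * q * (M - m)) := mul_le_mul_of_nonneg_left hNP hw0
    _ = ((p' : ℝ) * q) * (M - m)^2 := by ring
    _ ≤ D * (M - m)^2 := mul_le_mul_of_nonneg_right (hD p' q hp'q) (sq_nonneg _)

lemma eq_of_sq {x y : ℝ} (hx : 0 ≤ x) (hy : 0 ≤ y) (h : x^2 = y^2) : x = y := by
  rw [← Real.sqrt_sq hx, h, Real.sqrt_sq hy]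

lemma le_of_sq_le {T w : ℝ} (hT : 0 ≤ T) (hw : 0 ≤ w) (h : T^2 ≤ w^2) : T ≤ w := by
  calc T = Real.sqrt (T^2) := (Real.sqrt_sq hT).symm
    _ ≤ Real.sqrt (w^2) := Real.sqrt_le_sqrt h
    _ = w := Real.sqrt_sq hw

theorem stmt_11 (n : ℕ) (hn : 1 ≤ n) :
    sInf {w : ℝ | ∃ a : Fin (n + 1) → ℝ,
        (∑ j, (a j) ^ 2 = 1) ∧ (∑ j, a j = 0) ∧ w = simplexWidth n a} =
      if Odd n then 2 / Real.sqrt (n + 1)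
      else 2 * Real.sqrt (((n : ℝ) + 1) / ((n : ℝ) * ((n : ℝ) + 2))) := by
  have hn1 : (0:ℝ) < (n:ℝ) + 1 := by positivity
  rcases Nat.even_or_odd n with hev | hodd
  · -- n even, N = n+1 odd
    obtain ⟨k, hk⟩ := hev
    have hk1 : 1 ≤ k := by omega
    have hkR : (n:ℝ) = 2 * k := by rw [hk]; push_cast; ring
    have hkpos : (0:ℝ) < k := by exact_mod_cast hk1
    rw [if_neg (by simp [Nat.not_odd_iff_even.mpr ⟨k, hk⟩] : ¬ Odd n)]
    set T : ℝ := 2 * Real.sqrt (((n : ℝ) + 1) / ((n : ℝ) * ((n : ℝ) + 2))) with hT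
    have hT0 : 0 ≤ T := by positivity
    have hT2 : T^2 = ((n:ℝ)+1) / ((k:ℝ) * (k+1)) := by
      rw [hT, mul_pow, Real.sq_sqrt (by positivity)]
      rw [hkR]; field_simp
    apply IsLeast.csInf_eq
    constructor
    · -- membership via construction
      set c : ℝ := ((n:ℝ)+1) * k * (k+1) with hc
      have hcpos : 0 < c := by positivity
      set r : ℝ := Real.sqrt c with hr
      have hrpos : 0 < r := Real.sqrt_pos.mpr hcpos
      have hr2 : r^2 = c := Real.sq_sqrt hcpos.le
      obtain ⟨a, ha2, ha1, haw⟩ := construct n (k+1) k (by omega) (by omega) (by omega)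
        ((k:ℝ)/r) (((k:ℝ)+1)/r) (by positivity) (by positivity)
        (by push_cast; field_simp)
        (by
          push_cast
          field_simp
          rw [hr2, hc, hkR]
          ring)
      refine ⟨a, ha2, ha1, ?_⟩
      rw [haw]
      have : (k:ℝ)/r + ((k:ℝ)+1)/r = ((n:ℝ)+1)/r := by
        rw [hkR]; field_simp; ring
      rw [this]
      apply (eq_of_sq (by positivity) hT0 ?_).symm
      rw [hT2, div_pow, hr2, hc]
      field_simp
    · rintro w ⟨a, ha2, ha1, rfl⟩
      rw [simplexWidth_eq]
      set D : ℝ := (((n:ℝ)+1)^2 - 1)/4 with hD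
      have hDval : D = (n:ℝ) * ((n:ℝ)+2) / 4 := by rw [hD]; ring
      have hDpos : 0 < D := by rw [hDval]; positivity
      have key := lower_sq (n+1) a univ_nonempty ha2 ha1 D ?_
      · have hw0 : 0 ≤ univ.sup' univ_nonempty a - univ.inf' univ_nonempty a := by
          have j0 : Fin (n+1) := ⟨0, by omega⟩
          have h1 := Finset.le_sup' a (mem_univ j0)
          have h2 := Finset.inf'_le a (mem_univ j0)
          linarith
        apply le_of_sq_le hT0 hw0
        have hTD : T^2 * D = (n:ℝ)+1 := by
          rw [hT2, hDval, hkR, div_mul_div_comm, div_eq_iff (by positivity)]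
          ring
        push_cast at key
        nlinarith
      · intro p q hpq
        have hne : p ≠ q := by omega
        have hZ : (1:ℤ) ≤ ((p:ℤ) - q)^2 := by
          have h0 : (p:ℤ) - q ≠ 0 := by
            intro h; apply hne; omega
          have := Int.one_le_abs h0
          nlinarith [sq_abs ((p:ℤ) - q)]
        have hR : (1:ℝ) ≤ ((p:ℝ) - q)^2 := by exact_mod_cast hZ
        have hpqR : (p:ℝ) + q = (n:ℝ) + 1 := by exact_mod_cast hpq
        rw [hD]; nlinarith
  · -- n odd, N = n+1 even
    obtain ⟨k, hk⟩ := hodd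
    rw [if_pos ⟨k, hk⟩]
    set T : ℝ := 2 / Real.sqrt ((n:ℝ) + 1) with hT
    have hs1 : (0:ℝ) < Real.sqrt ((n:ℝ)+1) := Real.sqrt_pos.mpr hn1
    have hT0 : 0 ≤ T := by positivity
    have hT2 : T^2 = 4 / ((n:ℝ)+1) := by
      rw [hT, div_pow, Real.sq_sqrt hn1.le]; norm_num
    apply IsLeast.csInf_eq
    constructor
    · obtain ⟨a, ha2, ha1, haw⟩ := construct n (k+1) (k+1) (by omega) (by omega) (by omega)
        ((Real.sqrt ((n:ℝ)+1))⁻¹) ((Real.sqrt ((n:ℝ)+1))⁻¹) (by positivity) (by positivity)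
        rfl
        (by
          have hinv : ((Real.sqrt ((n:ℝ)+1))⁻¹)^2 = ((n:ℝ)+1)⁻¹ := by
            rw [inv_pow, Real.sq_sqrt hn1.le]
          rw [hinv]
          have hkR : (n:ℝ) = 2 * k + 1 := by rw [hk]; push_cast; ring
          push_cast
          rw [hkR]
          field_simp
          ring)
      refine ⟨a, ha2, ha1, ?_⟩
      rw [haw, hT]
      rw [div_eq_mul_inv]
      ring
    · rintro w ⟨a, ha2, ha1, rfl⟩
      rw [simplexWidth_eq]
      set D : ℝ := ((n:ℝ)+1)^2 / 4 with hD
      have hDpos : 0 < D := by positivity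
      have key := lower_sq (n+1) a univ_nonempty ha2 ha1 D ?_
      · have hw0 : 0 ≤ univ.sup' univ_nonempty a - univ.inf' univ_nonempty a := by
          have j0 : Fin (n+1) := ⟨0, by omega⟩
          have h1 := Finset.le_sup' a (mem_univ j0)
          have h2 := Finset.inf'_le a (mem_univ j0)
          linarith
        apply le_of_sq_le hT0 hw0
        have hTD : T^2 * D = (n:ℝ)+1 := by
          rw [hT2, hD]; field_simp
        push_cast at key
        nlinarith
      · intro p q hpq
        have hpqR : (p:ℝ) + q = (n:ℝ) + 1 := by exact_mod_cast hpq
        rw [hD]; nlinarith [sq_nonneg ((p:ℝ) - q)]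
end

section
/- Let n ≥ 2 and let u, v ∈ ℝ^n be unit vectors. Then ∑_{1 ≤ i < j ≤ n} |u_i v_j − u_j v_i| ≤ cot(π/(2n)). -/
open Finset Real Complex

noncomputable def om (m : ℕ) : ℂ := Complex.exp (2 * π * Complex.I / m)

lemma om_pow_m (m : ℕ) (hm : m ≠ 0) : (om m) ^ m = 1 :=
  (Complex.isPrimitiveRoot_exp m hm).pow_eq_one

lemma om_ne_zero (m : ℕ) : om m ≠ 0 := Complex.exp_ne_zero _

lemma orth (m : ℕ) (hm : m ≠ 0) (d : ℤ) :
    ∑ t ∈ range m, ((om m) ^ d) ^ t = if (m:ℤ) ∣ d then (m:ℂ) else 0 := by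
  have hprim := Complex.isPrimitiveRoot_exp m hm
  by_cases h : (m:ℤ) ∣ d
  · rw [if_pos h]
    obtain ⟨e, rfl⟩ := h
    have : (om m) ^ ((m:ℤ) * e) = 1 := by
      rw [zpow_mul, zpow_natCast, om_pow_m m hm, one_zpow]
    simp [this]
  · rw [if_neg h]
    have hne : (om m) ^ d ≠ 1 := fun hone => h ((hprim.zpow_eq_one_iff_dvd d).mp hone)
    rw [geom_sum_eq hne]
    have : ((om m) ^ d) ^ m = 1 := by
      rw [← zpow_natCast, ← zpow_mul, mul_comm, zpow_mul, zpow_natCast, om_pow_m m hm, one_zpow]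
    rw [this, sub_self, zero_div]

lemma conj_om_zpow (m : ℕ) (z : ℤ) :
    (starRingEnd ℂ) ((om m) ^ z) = (om m) ^ (-z) := by
  have h : (starRingEnd ℂ) (om m) = (om m)⁻¹ := by
    rw [om, ← Complex.exp_conj, ← Complex.exp_neg]
    congr 1
    simp [map_div₀, Complex.conj_I, map_ofNat]
    ring
  rw [map_zpow₀, h, inv_zpow, ← zpow_neg]

-- the shifted quadratic sum
lemma hS_lemma (m : ℕ) (hm : m ≠ 0) (w : ℕ → ℂ) (δ : ℤ)
    (C : ℕ → ℂ) (hC : C = fun (t:ℕ) => ∑ k ∈ range m, w k * (om m) ^ ((k:ℤ) * (t:ℤ))) :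
    ∑ t ∈ range m, (om m)^(δ * t) * (C t * (starRingEnd ℂ) (C t))
      = ∑ k ∈ range m, ∑ l ∈ range m, w k * (starRingEnd ℂ) (w l) *
          (if (m:ℤ) ∣ ((k:ℤ) - l + δ) then (m:ℂ) else 0) := by
  have hω := om_ne_zero m
  have hCC : ∀ t : ℕ, C t * (starRingEnd ℂ) (C t)
      = ∑ k ∈ range m, ∑ l ∈ range m,
          w k * (starRingEnd ℂ) (w l) * (om m) ^ (((k:ℤ) - l) * t) := by
    intro t
    rw [hC]
    simp only [map_sum, map_mul, conj_om_zpow]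
    rw [Finset.sum_mul_sum]
    apply Finset.sum_congr rfl; intro k _
    apply Finset.sum_congr rfl; intro l _
    rw [mul_mul_mul_comm, ← zpow_add₀ hω]
    congr 1
    ring_nf
  calc ∑ t ∈ range m, (om m)^(δ * t) * (C t * (starRingEnd ℂ) (C t))
      = ∑ t ∈ range m, ∑ k ∈ range m, ∑ l ∈ range m,
          w k * (starRingEnd ℂ) (w l) * (om m) ^ (((k:ℤ) - l + δ) * t) := by
        apply Finset.sum_congr rfl; intro t _
        rw [hCC t, Finset.mul_sum]
        apply Finset.sum_congr rfl; intro k _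
        rw [Finset.mul_sum]
        apply Finset.sum_congr rfl; intro l _
        rw [show (om m)^(δ*(t:ℤ)) * (w k * (starRingEnd ℂ) (w l) * (om m)^(((k:ℤ)-l)*t))
              = w k * (starRingEnd ℂ) (w l) * ((om m)^(((k:ℤ)-l)*t) * (om m)^(δ*(t:ℤ))) from by
            ring, ← zpow_add₀ hω]
        congr 2
        ring
    _ = ∑ k ∈ range m, ∑ l ∈ range m,
          w k * (starRingEnd ℂ) (w l) * ∑ t ∈ range m, (om m) ^ (((k:ℤ) - l + δ) * t) := by
        rw [Finset.sum_comm]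
        apply Finset.sum_congr rfl; intro k _
        rw [Finset.sum_comm]
        apply Finset.sum_congr rfl; intro l _
        rw [← Finset.mul_sum]
    _ = _ := by
        apply Finset.sum_congr rfl; intro k _
        apply Finset.sum_congr rfl; intro l _
        congr 1
        rw [← orth m hm ((k:ℤ) - l + δ)]
        apply Finset.sum_congr rfl; intro t _
        rw [zpow_mul, zpow_natCast]
lemma single_mod (m k : ℕ) (hm : 2 ≤ m) (hk : k < m) (a : ℕ → ℂ) :
    ∑ l ∈ range m, a l * (if (m:ℤ) ∣ ((k:ℤ) - l + 1) then (m:ℂ) else 0)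
      = a ((k+1) % m) * m := by
  have hm0 : 0 < m := by omega
  have hl0 : (k+1) % m < m := Nat.mod_lt _ hm0
  have hdm : m * ((k+1)/m) + (k+1) % m = k + 1 := Nat.div_add_mod (k+1) m
  have hdvd : (m:ℤ) ∣ ((k:ℤ) - ((k+1) % m : ℕ) + 1) := by
    refine ⟨((k+1)/m : ℕ), ?_⟩
    have hdmz : (m:ℤ) * (((k+1)/m : ℕ):ℤ) + (((k+1) % m : ℕ):ℤ) = (k:ℤ) + 1 := by
      exact_mod_cast hdm
    linarith
  have hzero : ∀ l ∈ range m, l ≠ (k+1) % m →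
      a l * (if (m:ℤ) ∣ ((k:ℤ) - l + 1) then (m:ℂ) else 0) = 0 := by
    intro l hl hne
    have hlm : l < m := mem_range.mp hl
    have hnd : ¬ (m:ℤ) ∣ ((k:ℤ) - l + 1) := by
      rintro ⟨q, hq⟩
      have hb1 : (k:ℤ) - l + 1 ≤ m := by
        have h1 : (k:ℤ) < m := by exact_mod_cast hk
        have h2 : (0:ℤ) ≤ l := by positivity
        omega
      have hb2 : -(m:ℤ) < (k:ℤ) - l + 1 := by
        have h1 : (l:ℤ) < m := by exact_mod_cast hlm
        have h2 : (0:ℤ) ≤ (k:ℤ) := by positivity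
        omega
      have hm2 : (2:ℤ) ≤ m := by exact_mod_cast hm
      have hq0 : q = 0 ∨ q = 1 := by
        rcases lt_trichotomy q 0 with h | h | h
        · exfalso; nlinarith
        · left; exact h
        · rcases lt_or_ge q 2 with h2 | h2
          · right; omega
          · exfalso; nlinarith
      apply hne
      rcases hq0 with rfl | rfl
      · have hlk : (l:ℤ) = (k:ℤ) + 1 := by omega
        have hh : l = k + 1 := by exact_mod_cast hlk
        subst hh
        exact (Nat.mod_eq_of_lt hlm).symm
      · have hl00 : (l:ℤ) = 0 := by omega
        have hh : l = 0 := by exact_mod_cast hl00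
        subst hh
        have hkk : k + 1 = m := by
          have h1 : (k:ℤ) + 1 = m := by omega
          exact_mod_cast h1
        rw [hkk, Nat.mod_self]
    simp [hnd]
  rw [Finset.sum_eq_single_of_mem _ (mem_range.mpr hl0) hzero, if_pos hdvd]


lemma re_helper (c y : ℝ) :
    ((2*(c:ℂ) - ((c:ℂ)+Complex.I) * Complex.exp ((y:ℝ) * Complex.I)
      - ((c:ℂ)-Complex.I) * Complex.exp ((-y : ℝ) * Complex.I))).re
    = 2*c - 2*c*Real.cos y + 2*Real.sin y := by
  have h2 : Complex.exp ((-y : ℝ) * Complex.I)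
      = (starRingEnd ℂ) (Complex.exp ((y:ℝ) * Complex.I)) := by
    rw [← Complex.exp_conj]
    congr 1
    simp [Complex.conj_I]
  rw [h2]
  simp only [Complex.sub_re, Complex.mul_re, Complex.add_re, Complex.add_im, Complex.sub_im,
    Complex.I_re, Complex.I_im, Complex.ofReal_re, Complex.ofReal_im, Complex.conj_re,
    Complex.conj_im, Complex.re_ofNat, Complex.im_ofNat, Complex.exp_ofReal_mul_I_re, Complex.exp_ofReal_mul_I_im, Complex.mul_im]
  ring

lemma rhs_re (m : ℕ) (c s : ℝ) (T : ℂ) :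
    ((m:ℂ) * (2*(c:ℂ)*(s:ℂ) - ((c:ℂ)+Complex.I) * (starRingEnd ℂ) T - ((c:ℂ)-Complex.I) * T)).re
    = m * (2*c*s - 2*c*T.re - 2*T.im) := by
  simp only [Complex.mul_re, Complex.sub_re, Complex.sub_im, Complex.mul_im, Complex.add_re,
    Complex.add_im, Complex.I_re, Complex.I_im, Complex.ofReal_re, Complex.ofReal_im,
    Complex.conj_re, Complex.conj_im, Complex.natCast_re, Complex.natCast_im, Complex.re_ofNat, Complex.im_ofNat]
  ring


lemma wirtinger (m : ℕ) (hm : 2 ≤ m) (w : ℕ → ℂ) (hw : w m = w 0) :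
    2 * ∑ k ∈ range m, ((starRingEnd ℂ) (w k) * w (k+1)).im
      ≤ Real.cot (π / m) * ∑ k ∈ range m, Complex.normSq (w (k+1) - w k) := by
  have hm0 : m ≠ 0 := by omega
  have hmpos : (0:ℝ) < m := by positivity
  set c : ℝ := Real.cot (π / m) with hc
  set C : ℕ → ℂ := fun (t:ℕ) => ∑ k ∈ range m, w k * (om m) ^ ((k:ℤ) * (t:ℤ)) with hCdef
  have hS := hS_lemma m hm0 w
  set T : ℂ := ∑ k ∈ range m, (starRingEnd ℂ) (w k) * w (k+1) with hT
  set s : ℝ := ∑ k ∈ range m, Complex.normSq (w k) with hs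
  have hwrap : ∀ k ∈ range m, w ((k+1) % m) = w (k+1) := by
    intro k hk
    have hk' := mem_range.mp hk
    rcases Nat.lt_or_ge (k+1) m with h | h
    · rw [Nat.mod_eq_of_lt h]
    · have hkm : k + 1 = m := by omega
      rw [hkm, Nat.mod_self, hw]
  -- S0
  have hS0 : ∑ t ∈ range m, (C t * (starRingEnd ℂ) (C t)) = (m:ℂ) * (s:ℂ) := by
    have h0 := hS 0 C rfl
    simp only [zero_mul, zpow_zero, one_mul, add_zero] at h0
    rw [h0]
    have hdiag : ∀ k ∈ range m,
        ∑ l ∈ range m, w k * (starRingEnd ℂ) (w l) *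
          (if (m:ℤ) ∣ ((k:ℤ) - l) then (m:ℂ) else 0)
        = (Complex.normSq (w k) : ℂ) * m := by
      intro k hk
      have hkm := mem_range.mp hk
      have hzero : ∀ l ∈ range m, l ≠ k →
          w k * (starRingEnd ℂ) (w l) * (if (m:ℤ) ∣ ((k:ℤ) - l) then (m:ℂ) else 0) = 0 := by
        intro l hl hne
        have hlm := mem_range.mp hl
        have hnd : ¬ (m:ℤ) ∣ ((k:ℤ) - l) := by
          rintro ⟨q, hq⟩
          have hb1 : (k:ℤ) - l < m := by
            have h1 : (k:ℤ) < m := by exact_mod_cast hkm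
            have h2 : (0:ℤ) ≤ l := by positivity
            omega
          have hb2 : -(m:ℤ) < (k:ℤ) - l := by
            have h1 : (l:ℤ) < m := by exact_mod_cast hlm
            have h2 : (0:ℤ) ≤ (k:ℤ) := by positivity
            omega
          have hm2 : (2:ℤ) ≤ m := by exact_mod_cast hm
          have hq0 : q = 0 := by
            rcases lt_trichotomy q 0 with h | h | h
            · exfalso; nlinarith
            · exact h
            · exfalso; nlinarith
          apply hne
          rw [hq0, mul_zero] at hq
          have : (l:ℤ) = k := by omega
          exact_mod_cast this
        simp [hnd]
      rw [Finset.sum_eq_single_of_mem k hk hzero, if_pos (by simp), Complex.mul_conj]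
    rw [Finset.sum_congr rfl hdiag, ← Finset.sum_mul]
    rw [mul_comm]
    congr 1
    rw [hs]
    push_cast
    rfl
  -- S1
  have hS1 : ∑ t ∈ range m, (om m)^((1:ℤ) * t) * (C t * (starRingEnd ℂ) (C t))
      = (m:ℂ) * (starRingEnd ℂ) T := by
    rw [hS 1 C rfl]
    have h1 : ∀ k ∈ range m,
        ∑ l ∈ range m, w k * (starRingEnd ℂ) (w l) *
          (if (m:ℤ) ∣ ((k:ℤ) - l + 1) then (m:ℂ) else 0)
        = w k * (starRingEnd ℂ) (w (k+1)) * m := by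
      intro k hk
      rw [single_mod m k hm (mem_range.mp hk) (fun l => w k * (starRingEnd ℂ) (w l)),
        hwrap k hk]
    rw [Finset.sum_congr rfl h1, ← Finset.sum_mul, hT, map_sum]
    rw [mul_comm]
    congr 1
    apply Finset.sum_congr rfl
    intro k _
    rw [map_mul, Complex.conj_conj]
  -- S2
  have hS2 : ∑ t ∈ range m, (om m)^((-1:ℤ) * t) * (C t * (starRingEnd ℂ) (C t))
      = (m:ℂ) * T := by
    rw [hS (-1) C rfl]
    rw [Finset.sum_comm]
    have h1 : ∀ l ∈ range m,
        ∑ k ∈ range m, w k * (starRingEnd ℂ) (w l) *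
          (if (m:ℤ) ∣ ((k:ℤ) - l + -1) then (m:ℂ) else 0)
        = (starRingEnd ℂ) (w l) * w (l+1) * m := by
      intro l hl
      have hcond : ∀ k : ℕ, (if (m:ℤ) ∣ ((k:ℤ) - l + -1) then (m:ℂ) else 0)
          = (if (m:ℤ) ∣ ((l:ℤ) - k + 1) then (m:ℂ) else 0) := by
        intro k
        congr 1
        rw [show (l:ℤ) - k + 1 = -((k:ℤ) - l + -1) by ring, dvd_neg]
      calc ∑ k ∈ range m, w k * (starRingEnd ℂ) (w l) *
            (if (m:ℤ) ∣ ((k:ℤ) - l + -1) then (m:ℂ) else 0)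
          = ∑ k ∈ range m, w k * (starRingEnd ℂ) (w l) *
            (if (m:ℤ) ∣ ((l:ℤ) - k + 1) then (m:ℂ) else 0) := by
            apply Finset.sum_congr rfl; intro k _; rw [hcond k]
        _ = (fun k => w k * (starRingEnd ℂ) (w l)) ((l+1) % m) * m := by
            rw [single_mod m l hm (mem_range.mp hl) (fun k => w k * (starRingEnd ℂ) (w l))]
        _ = (starRingEnd ℂ) (w l) * w (l+1) * m := by
            beta_reduce
            rw [hwrap l hl]; ring
    rw [Finset.sum_congr rfl h1, ← Finset.sum_mul, hT, mul_comm]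
  -- the combined identity
  have hE : ∑ t ∈ range m,
      (2*(c:ℂ) - ((c:ℂ)+Complex.I) * (om m)^((1:ℤ)*(t:ℤ))
        - ((c:ℂ)-Complex.I) * (om m)^((-1:ℤ)*(t:ℤ))) * (C t * (starRingEnd ℂ) (C t))
      = (m:ℂ) * (2*(c:ℂ)*(s:ℂ) - ((c:ℂ)+Complex.I) * (starRingEnd ℂ) T
          - ((c:ℂ)-Complex.I) * T) := by
    have hexp : ∀ t ∈ range m,
        (2*(c:ℂ) - ((c:ℂ)+Complex.I) * (om m)^((1:ℤ)*(t:ℤ))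
          - ((c:ℂ)-Complex.I) * (om m)^((-1:ℤ)*(t:ℤ))) * (C t * (starRingEnd ℂ) (C t))
        = 2*(c:ℂ) * (C t * (starRingEnd ℂ) (C t))
          - ((c:ℂ)+Complex.I) * ((om m)^((1:ℤ)*(t:ℤ)) * (C t * (starRingEnd ℂ) (C t)))
          - ((c:ℂ)-Complex.I) * ((om m)^((-1:ℤ)*(t:ℤ)) * (C t * (starRingEnd ℂ) (C t))) := by
      intro t _; ring
    rw [Finset.sum_congr rfl hexp, Finset.sum_sub_distrib, Finset.sum_sub_distrib,
      ← Finset.mul_sum, ← Finset.mul_sum, ← Finset.mul_sum, hS0, hS1, hS2]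
    ring
  -- real parts
  have hωt : ∀ t:ℕ, (om m)^((1:ℤ)*(t:ℤ)) = Complex.exp (((2*π*t/m : ℝ)) * Complex.I) := by
    intro t
    rw [one_mul, zpow_natCast, om, ← Complex.exp_nat_mul]
    congr 1
    push_cast
    ring
  have hωnt : ∀ t:ℕ, (om m)^((-1:ℤ)*(t:ℤ)) = Complex.exp ((-(2*π*t/m) : ℝ) * Complex.I) := by
    intro t
    rw [show ((-1:ℤ)*(t:ℤ)) = -(t:ℤ) by ring, zpow_neg, zpow_natCast, om,
      ← Complex.exp_nat_mul, ← Complex.exp_neg]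
    congr 1
    push_cast
    ring
  have hgre : ∀ t:ℕ,
      ((2*(c:ℂ) - ((c:ℂ)+Complex.I) * (om m)^((1:ℤ)*(t:ℤ))
        - ((c:ℂ)-Complex.I) * (om m)^((-1:ℤ)*(t:ℤ)))).re
      = 2*c - 2*c*Real.cos (2*π*t/m) + 2*Real.sin (2*π*t/m) := by
    intro t
    rw [hωt t, hωnt t]
    exact re_helper c (2*π*t/m)
  have hEre : ∑ t ∈ range m, (2*c - 2*c*Real.cos (2*π*t/m) + 2*Real.sin (2*π*t/m))
        * Complex.normSq (C t)
      = m * (2*c*s - 2*c*T.re - 2*T.im) := by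
    have h1 := congrArg Complex.re hE
    rw [Complex.re_sum] at h1
    have h2 : ∀ t ∈ range m,
        ((2*(c:ℂ) - ((c:ℂ)+Complex.I) * (om m)^((1:ℤ)*(t:ℤ))
          - ((c:ℂ)-Complex.I) * (om m)^((-1:ℤ)*(t:ℤ))) * (C t * (starRingEnd ℂ) (C t))).re
        = (2*c - 2*c*Real.cos (2*π*t/m) + 2*Real.sin (2*π*t/m)) * Complex.normSq (C t) := by
      intro t _
      rw [Complex.mul_conj]
      rw [show ∀ z : ℂ, ∀ r : ℝ, (z * (r:ℂ)).re = z.re * r from fun z r => by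
        simp [Complex.mul_re]]
      rw [hgre t]
    rw [Finset.sum_congr rfl h2] at h1
    rw [h1]
    exact rhs_re m c s T
  -- positivity of the symbol
  have hsinm : 0 < Real.sin (π/m) := by
    apply Real.sin_pos_of_pos_of_lt_pi
    · positivity
    · rw [div_lt_iff₀ hmpos]
      have hm2' : (2:ℝ) ≤ m := by exact_mod_cast hm
      nlinarith [Real.pi_pos]
  have hg : ∀ t ∈ range m, 0 ≤ 2*c - 2*c*Real.cos (2*π*t/m) + 2*Real.sin (2*π*t/m) := by
    intro t ht
    have htm := mem_range.mp ht
    have htm' : (t:ℝ) + 1 ≤ m := by exact_mod_cast htm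
    set x : ℝ := π*t/m with hxdef
    have hx0 : 0 ≤ x := by positivity
    have hxpm : x + π/m ≤ π := by
      rw [hxdef]
      rw [← add_div, div_le_iff₀ hmpos]
      nlinarith [Real.pi_pos]
    have hxle : x ≤ π := by
      have : 0 ≤ π/m := by positivity
      linarith
    have hsx : 0 ≤ Real.sin x := Real.sin_nonneg_of_nonneg_of_le_pi hx0 hxle
    have hsx2 : 0 ≤ Real.sin (x + π/m) := Real.sin_nonneg_of_nonneg_of_le_pi (by positivity) hxpm
    have hθ : 2*π*(t:ℝ)/m = 2*x := by rw [hxdef]; ring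
    have hkey : c * Real.sin x + Real.cos x = Real.sin (x + π/m) / Real.sin (π/m) := by
      rw [hc, Real.cot_eq_cos_div_sin, Real.sin_add]
      field_simp
    have hgeq : 2*c - 2*c*Real.cos (2*x) + 2*Real.sin (2*x)
        = 4 * Real.sin x * (Real.sin (x + π/m) / Real.sin (π/m)) := by
      rw [Real.cos_two_mul, Real.sin_two_mul, ← hkey]
      linear_combination (-(4*c)) * (Real.sin_sq_add_cos_sq x)
    rw [hθ, hgeq]
    positivity
  have hEnn : 0 ≤ m * (2*c*s - 2*c*T.re - 2*T.im) := by
    rw [← hEre]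
    apply Finset.sum_nonneg
    intro t ht
    exact mul_nonneg (hg t ht) (Complex.normSq_nonneg _)
  have hX : 0 ≤ 2*c*s - 2*c*T.re - 2*T.im := by nlinarith
  -- final bookkeeping
  have hshift : ∑ k ∈ range m, Complex.normSq (w (k+1)) = ∑ k ∈ range m, Complex.normSq (w k) := by
    have h1 := Finset.sum_range_succ' (fun k => Complex.normSq (w k)) m
    have h2 := Finset.sum_range_succ (fun k => Complex.normSq (w k)) m
    rw [hw] at h2
    rw [h2] at h1
    linarith
  have hΔ : ∑ k ∈ range m, Complex.normSq (w (k+1) - w k) = 2*s - 2*T.re := by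
    have heach : ∀ k ∈ range m, Complex.normSq (w (k+1) - w k)
        = Complex.normSq (w (k+1)) + Complex.normSq (w k)
          - 2 * ((starRingEnd ℂ) (w k) * w (k+1)).re := by
      intro k _
      rw [Complex.normSq_sub]
      congr 2
      rw [mul_comm]
    rw [Finset.sum_congr rfl heach]
    rw [Finset.sum_sub_distrib, Finset.sum_add_distrib, hshift, ← Finset.mul_sum]
    have hTre : T.re = ∑ k ∈ range m, ((starRingEnd ℂ) (w k) * w (k+1)).re := Complex.re_sum _ _
    rw [hs, ← hTre]
    ring
  have hTim : T.im = ∑ k ∈ range m, ((starRingEnd ℂ) (w k) * w (k+1)).im := Complex.im_sum _ _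
  rw [← hTim, hΔ]
  nlinarith

lemma conj_mul_im (a b c d : ℝ) :
    ((starRingEnd ℂ) ((a:ℂ) + (b:ℂ)*Complex.I) * ((c:ℂ) + (d:ℂ)*Complex.I)).im = a*d - b*c := by
  simp [Complex.mul_im, Complex.add_re, Complex.add_im, Complex.mul_re]
  ring

lemma key_prod (r s a b : ℝ) :
    ((starRingEnd ℂ) ((r:ℂ) * Complex.exp ((a:ℝ) * Complex.I)) *
      ((s:ℂ) * Complex.exp ((b:ℝ) * Complex.I))).im = r * s * Real.sin (b - a) := by
  have h1 : (starRingEnd ℂ) ((r:ℂ) * Complex.exp ((a:ℝ) * Complex.I))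
      = (r:ℂ) * Complex.exp (((-a : ℝ):ℂ) * Complex.I) := by
    rw [map_mul, ← Complex.exp_conj, Complex.conj_ofReal]
    congr 1
    simp [Complex.conj_I]
  rw [h1, mul_mul_mul_comm, ← Complex.exp_add]
  have h2 : ((-a : ℝ):ℂ) * Complex.I + ((b:ℝ):ℂ) * Complex.I = ((b - a : ℝ):ℂ) * Complex.I := by
    push_cast
    ring
  rw [h2]
  simp only [Complex.mul_im, Complex.mul_re, Complex.ofReal_re, Complex.ofReal_im,
    Complex.exp_ofReal_mul_I_re, Complex.exp_ofReal_mul_I_im]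
  ring

lemma im_conj_mul_nonneg (z w : ℂ) (hz0 : 0 ≤ z.arg) (hle : z.arg ≤ w.arg) (hw : w.arg < π) :
    0 ≤ ((starRingEnd ℂ) z * w).im := by
  have hz := Complex.norm_mul_exp_arg_mul_I z
  have hww := Complex.norm_mul_exp_arg_mul_I w
  rw [show (starRingEnd ℂ) z * w
      = (starRingEnd ℂ) (((‖z‖ : ℝ) : ℂ) * Complex.exp ((z.arg : ℝ) * Complex.I)) *
        (((‖w‖ : ℝ) : ℂ) * Complex.exp ((w.arg : ℝ) * Complex.I)) by rw [hz, hww],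
    key_prod]
  apply mul_nonneg (mul_nonneg (norm_nonneg z) (norm_nonneg w))
  apply Real.sin_nonneg_of_nonneg_of_le_pi
  · linarith
  · linarith

noncomputable def flipC (z : ℂ) : ℂ := if 0 ≤ z.arg ∧ z.arg < π then z else -z

lemma flipC_arg (z : ℂ) : 0 ≤ (flipC z).arg ∧ (flipC z).arg < π := by
  rw [flipC]
  by_cases h : 0 ≤ z.arg ∧ z.arg < π
  · rw [if_pos h]; exact h
  · rw [if_neg h]
    rw [not_and_or, not_le, not_lt] at h
    rcases h with h | h
    · have him : z.im < 0 := Complex.arg_neg_iff.mp h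
      rw [Complex.arg_neg_eq_arg_add_pi_of_im_neg him]
      have h2 := Complex.neg_pi_lt_arg z
      constructor <;> linarith
    · have hpi : z.arg = π := le_antisymm (Complex.arg_le_pi z) h
      have hz : z.re < 0 ∧ z.im = 0 := Complex.arg_eq_pi_iff.mp hpi
      have : (-z).arg = 0 := by
        rw [Complex.arg_eq_zero_iff]
        constructor
        · simp [Complex.neg_re]; linarith [hz.1]
        · simp [Complex.neg_im, hz.2]
      rw [this]
      exact ⟨le_refl 0, Real.pi_pos⟩

lemma flipC_cases (z : ℂ) : flipC z = z ∨ flipC z = -z := by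
  rw [flipC]; by_cases h : 0 ≤ z.arg ∧ z.arg < π
  · left; rw [if_pos h]
  · right; rw [if_neg h]

lemma abs_im_flipC (z w : ℂ) :
    |((starRingEnd ℂ) (flipC z) * flipC w).im| = |((starRingEnd ℂ) z * w).im| := by
  rcases flipC_cases z with hz | hz <;> rcases flipC_cases w with hw | hw <;>
    rw [hz, hw] <;>
    · rw [show ∀ x y : ℂ, |((starRingEnd ℂ) x * y).im| = |x.re * y.im - x.im * y.re| from
        fun x y => by simp [Complex.mul_im]; ring_nf]
      rw [show ∀ x y : ℂ, |((starRingEnd ℂ) x * y).im| = |x.re * y.im - x.im * y.re| from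
        fun x y => by simp [Complex.mul_im]; ring_nf]
      simp [Complex.neg_re, Complex.neg_im, neg_mul, mul_neg, neg_sub, abs_sub_comm]
      all_goals rw [neg_add_eq_sub, abs_sub_comm]

lemma normSq_flipC (z : ℂ) : Complex.normSq (flipC z) = Complex.normSq z := by
  rcases flipC_cases z with hz | hz <;> rw [hz] <;> simp

lemma abs_im_symm (z w : ℂ) :
    |((starRingEnd ℂ) z * w).im| = |((starRingEnd ℂ) w * z).im| := by
  have : (starRingEnd ℂ) w * z = (starRingEnd ℂ) ((starRingEnd ℂ) z * w) := by
    rw [map_mul, Complex.conj_conj]; ring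
  rw [this, Complex.conj_im, abs_neg]

lemma sum_Ioi_eq_half (n : ℕ) (F : Fin n → Fin n → ℝ) (hsym : ∀ i j, F i j = F j i)
    (hdiag : ∀ i, F i i = 0) :
    ∑ i, ∑ j ∈ Finset.Ioi i, F i j = (∑ i, ∑ j, F i j) / 2 := by
  have hIoi : ∀ (G : Fin n → Fin n → ℝ) (i : Fin n),
      ∑ j ∈ Finset.Ioi i, G i j = ∑ j, if i < j then G i j else 0 := by
    intro G i
    rw [show (∑ j, if i < j then G i j else 0) = ∑ j, if j ∈ Finset.Ioi i then G i j else 0 from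
      Finset.sum_congr rfl (fun j _ => by simp [Finset.mem_Ioi])]
    rw [Finset.sum_ite_mem, Finset.univ_inter]
  have htri : ∀ i j : Fin n, F i j = (if i < j then F i j else 0) + (if j < i then F i j else 0)
      + (if i = j then F i j else 0) := by
    intro i j
    rcases lt_trichotomy i j with h | h | h
    · rw [if_pos h, if_neg (asymm h), if_neg h.ne]
      ring
    · subst h
      simp [lt_irrefl, hdiag]
    · rw [if_neg (asymm h), if_pos h, if_neg (ne_of_gt h)]
      ring
  have htot : ∑ i, ∑ j, F i j
      = (∑ i, ∑ j, if i < j then F i j else 0) + (∑ i, ∑ j, if j < i then F i j else 0)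
        + (∑ i, ∑ j, if i = j then F i j else 0) := by
    rw [← Finset.sum_add_distrib, ← Finset.sum_add_distrib]
    apply Finset.sum_congr rfl; intro i _
    rw [← Finset.sum_add_distrib, ← Finset.sum_add_distrib]
    exact Finset.sum_congr rfl (fun j _ => htri i j)
  have hdiag2 : (∑ i, ∑ j, if i = j then F i j else 0) = 0 := by
    apply Finset.sum_eq_zero; intro i _
    rw [Finset.sum_ite_eq]
    simp [hdiag]
  have hB : (∑ i, ∑ j, if j < i then F i j else 0) = ∑ i, ∑ j, if i < j then F i j else 0 := by
    rw [Finset.sum_comm]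
    apply Finset.sum_congr rfl; intro i _
    apply Finset.sum_congr rfl; intro j _
    rw [hsym]
  have hA : ∑ i, ∑ j ∈ Finset.Ioi i, F i j = ∑ i, ∑ j, if i < j then F i j else 0 :=
    Finset.sum_congr rfl (fun i _ => hIoi F i)
  rw [hA]
  rw [htot, hB, hdiag2]
  ring

lemma sum_pairs_perm (n : ℕ) (F : Fin n → Fin n → ℝ) (hsym : ∀ i j, F i j = F j i)
    (hdiag : ∀ i, F i i = 0) (σ : Equiv.Perm (Fin n)) :
    ∑ i, ∑ j ∈ Finset.Ioi i, F (σ i) (σ j) = ∑ i, ∑ j ∈ Finset.Ioi i, F i j := by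
  rw [sum_Ioi_eq_half n (fun i j => F (σ i) (σ j)) (fun i j => hsym _ _) (fun i => hdiag _),
    sum_Ioi_eq_half n F hsym hdiag]
  congr 1
  calc ∑ i, ∑ j, F (σ i) (σ j) = ∑ i, ∑ j, F (σ i) j := by
        apply Finset.sum_congr rfl; intro i _
        exact Equiv.sum_comp σ (fun j => F (σ i) j)
    _ = ∑ i, ∑ j, F i j := Equiv.sum_comp σ (fun i => ∑ j, F i j)

theorem stmt_14 (n : ℕ) (hn : 2 ≤ n) (u v : Fin n → ℝ)
    (hu : ∑ j, (u j) ^ 2 = 1) (hv : ∑ j, (v j) ^ 2 = 1) :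
    ∑ i, ∑ j ∈ Finset.Ioi i, |u i * v j - u j * v i| ≤ Real.cot (π / (2 * n)) := by
  classical
  set ζ : Fin n → ℂ := fun k => (u k : ℂ) + (v k : ℂ) * Complex.I with hζ
  set η : Fin n → ℂ := fun k => flipC (ζ k) with hη
  set σ : Equiv.Perm (Fin n) := Tuple.sort (fun k => (η k).arg) with hσ
  set W : Fin n → ℂ := fun k => η (σ k) with hW
  have hmono : Monotone ((fun k => (η k).arg) ∘ σ) := Tuple.monotone_sort _
  -- Step 1 : rewrite in terms of η
  have step1 : ∑ i, ∑ j ∈ Finset.Ioi i, |u i * v j - u j * v i|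
      = ∑ i, ∑ j ∈ Finset.Ioi i, |((starRingEnd ℂ) (η i) * η j).im| := by
    apply Finset.sum_congr rfl; intro i _
    apply Finset.sum_congr rfl; intro j _
    rw [hη]
    beta_reduce
    rw [abs_im_flipC, hζ]
    beta_reduce
    rw [conj_mul_im]
    congr 1
    ring
  -- Step 2 : permutation invariance
  have hsym : ∀ i j : Fin n, |((starRingEnd ℂ) (η i) * η j).im|
      = |((starRingEnd ℂ) (η j) * η i).im| := fun i j => abs_im_symm _ _
  have hdiag : ∀ i : Fin n, |((starRingEnd ℂ) (η i) * η i).im| = 0 := by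
    intro i
    rw [mul_comm, Complex.mul_conj]
    simp
  have step2 : ∑ i, ∑ j ∈ Finset.Ioi i, |((starRingEnd ℂ) (η i) * η j).im|
      = ∑ i, ∑ j ∈ Finset.Ioi i, |((starRingEnd ℂ) (W i) * W j).im| :=
    (sum_pairs_perm n (fun i j => |((starRingEnd ℂ) (η i) * η j).im|) hsym hdiag σ).symm
  -- Step 3 : drop absolute values
  have hWnonneg : ∀ i j : Fin n, i ≤ j → 0 ≤ ((starRingEnd ℂ) (W i) * W j).im := by
    intro i j hij
    have h1 := flipC_arg (ζ (σ i))
    have h2 := flipC_arg (ζ (σ j))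
    have h3 : (η (σ i)).arg ≤ (η (σ j)).arg := hmono hij
    exact im_conj_mul_nonneg _ _ h1.1 h3 h2.2
  have step3 : ∑ i, ∑ j ∈ Finset.Ioi i, |((starRingEnd ℂ) (W i) * W j).im|
      = ∑ i, ∑ j ∈ Finset.Ioi i, ((starRingEnd ℂ) (W i) * W j).im := by
    apply Finset.sum_congr rfl; intro i _
    apply Finset.sum_congr rfl; intro j hj
    exact abs_of_nonneg (hWnonneg i j (Finset.mem_Ioi.mp hj).le)
  -- ℕ-indexed machinery
  set Z : ℕ → ℂ := fun k => if h : k < n then W ⟨k, h⟩ else 0 with hZdef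
  set P : ℕ → ℂ := fun k => ∑ i ∈ range k, Z i with hPdef
  have hZ : ∀ i : Fin n, Z i.val = W i := by
    intro i
    rw [hZdef]
    beta_reduce
    rw [dif_pos i.isLt]
  set S₀ : ℝ := ∑ k ∈ range n, ((starRingEnd ℂ) (P k) * Z k).im with hS₀
  -- claim A
  have claimA : ∑ i, ∑ j ∈ Finset.Ioi i, ((starRingEnd ℂ) (W i) * W j).im = S₀ := by
    have hIoi : ∀ i : Fin n, ∑ j ∈ Finset.Ioi i, ((starRingEnd ℂ) (W i) * W j).im
        = ∑ j : Fin n, if i < j then ((starRingEnd ℂ) (W i) * W j).im else 0 := by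
      intro i
      rw [show (∑ j : Fin n, if i < j then ((starRingEnd ℂ) (W i) * W j).im else 0)
          = ∑ j : Fin n, if j ∈ Finset.Ioi i then ((starRingEnd ℂ) (W i) * W j).im else 0 from
        Finset.sum_congr rfl (fun j _ => by simp [Finset.mem_Ioi])]
      rw [Finset.sum_ite_mem, Finset.univ_inter]
    have hinner : ∀ i : Fin n,
        (∑ j : Fin n, if i < j then ((starRingEnd ℂ) (W i) * W j).im else 0)
        = ∑ b ∈ range n, if i.val < b then ((starRingEnd ℂ) (Z i.val) * Z b).im else 0 := by
      intro i
      rw [← Fin.sum_univ_eq_sum_range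
        (fun b => if i.val < b then ((starRingEnd ℂ) (Z i.val) * Z b).im else 0) n]
      apply Finset.sum_congr rfl; intro j _
      rw [hZ i, hZ j]
      exact if_congr Fin.lt_def rfl rfl
    have houter : ∑ i, ∑ j ∈ Finset.Ioi i, ((starRingEnd ℂ) (W i) * W j).im
        = ∑ a ∈ range n, ∑ b ∈ range n,
            if a < b then ((starRingEnd ℂ) (Z a) * Z b).im else 0 := by
      rw [← Fin.sum_univ_eq_sum_range
        (fun a => ∑ b ∈ range n, if a < b then ((starRingEnd ℂ) (Z a) * Z b).im else 0) n]
      apply Finset.sum_congr rfl; intro i _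
      rw [hIoi i, hinner i]
    rw [houter, Finset.sum_comm]
    rw [hS₀]
    apply Finset.sum_congr rfl; intro b hb
    have hbn := mem_range.mp hb
    have h1 : ∑ a ∈ range n, (if a < b then ((starRingEnd ℂ) (Z a) * Z b).im else 0)
        = ∑ a ∈ range b, ((starRingEnd ℂ) (Z a) * Z b).im := by
      rw [Finset.sum_ite, Finset.sum_const_zero, add_zero]
      apply Finset.sum_congr _ (fun _ _ => rfl)
      ext a
      simp only [Finset.mem_filter, Finset.mem_range]
      omega
    rw [h1, hPdef]
    beta_reduce
    rw [map_sum, Finset.sum_mul, Complex.im_sum]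
  -- claim B
  have claimB : ∑ k ∈ range n, Complex.normSq (Z k) = 2 := by
    rw [← Fin.sum_univ_eq_sum_range (fun k => Complex.normSq (Z k)) n]
    have h1 : ∀ i : Fin n, Complex.normSq (Z i.val) = Complex.normSq (η (σ i)) := by
      intro i
      rw [hZ i, hW]
    rw [Finset.sum_congr rfl (fun i _ => h1 i)]
    rw [Equiv.sum_comp σ (fun k => Complex.normSq (η k))]
    have h2 : ∀ k : Fin n, Complex.normSq (η k) = (u k)^2 + (v k)^2 := by
      intro k
      rw [hη]
      beta_reduce
      rw [normSq_flipC, hζ]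
      beta_reduce
      rw [Complex.normSq_add_mul_I]
    rw [Finset.sum_congr rfl (fun k _ => h2 k), Finset.sum_add_distrib, hu, hv]
    norm_num
  -- doubled polygon
  set w : ℕ → ℂ := fun k => if k ≤ n then P k else P n - P (k - n) with hwdef
  have hP0 : P 0 = 0 := by rw [hPdef]; simp
  have hPsucc : ∀ k, P (k+1) = P k + Z k := by
    intro k
    rw [hPdef]
    beta_reduce
    rw [Finset.sum_range_succ]
  have hwlow : ∀ k, k ≤ n → w k = P k := by
    intro k hk
    rw [hwdef]
    beta_reduce
    rw [if_pos hk]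
  have hwhigh : ∀ j, j ≤ n → w (n + j) = P n - P j := by
    intro j hj
    rw [hwdef]
    beta_reduce
    by_cases h : n + j ≤ n
    · have hj0 : j = 0 := by omega
      rw [if_pos h, hj0, hP0, add_zero, sub_zero]
    · rw [if_neg h]
      have e : n + j - n = j := by omega
      rw [e]
  have hw2n : w (2*n) = w 0 := by
    have h1 : w (2*n) = P n - P n := by
      have : 2*n = n + n := by ring
      rw [this, hwhigh n (le_refl n)]
    rw [h1, hwlow 0 (by omega), hP0, sub_self]
  have hsplit : ∀ f : ℕ → ℝ, ∑ k ∈ range (2*n), f k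
      = ∑ k ∈ range n, f k + ∑ j ∈ range n, f (n + j) := by
    intro f
    have h1 : ∑ i ∈ Finset.Ico n (2*n), f i = ∑ j ∈ range (2*n - n), f (n + j) :=
      Finset.sum_Ico_eq_sum_range f n (2*n)
    have h2 : 2*n - n = n := by omega
    rw [h2] at h1
    rw [Finset.range_eq_Ico, ← Finset.sum_Ico_consecutive f (by omega : 0 ≤ n)
      (by omega : n ≤ 2*n), ← Finset.range_eq_Ico, h1]
  -- claim C
  have claimC : ∑ k ∈ range (2*n), ((starRingEnd ℂ) (w k) * w (k+1)).im = 2 * S₀ := by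
    rw [hsplit]
    have hfirst : ∀ k ∈ range n, ((starRingEnd ℂ) (w k) * w (k+1)).im
        = ((starRingEnd ℂ) (P k) * Z k).im := by
      intro k hk
      have hkn := mem_range.mp hk
      rw [hwlow k (by omega), hwlow (k+1) (by omega), hPsucc k, mul_add, Complex.add_im,
        mul_comm ((starRingEnd ℂ) (P k)) (P k), Complex.mul_conj]
      simp
    have hsecond : ∀ j ∈ range n, ((starRingEnd ℂ) (w (n+j)) * w (n+j+1)).im
        = ((starRingEnd ℂ) (P j) * Z j).im - ((starRingEnd ℂ) (P n) * Z j).im := by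
      intro j hj
      have hjn := mem_range.mp hj
      have e1 : n + j + 1 = n + (j + 1) := by ring
      rw [hwhigh j (by omega), e1, hwhigh (j+1) (by omega), hPsucc j]
      have e2 : P n - (P j + Z j) = (P n - P j) - Z j := by ring
      have e3 : (starRingEnd ℂ) (P n - P j) = (starRingEnd ℂ) (P n) - (starRingEnd ℂ) (P j) :=
        map_sub _ _ _
      rw [e2, mul_sub, Complex.sub_im, mul_comm ((starRingEnd ℂ) (P n - P j)) (P n - P j),
        Complex.mul_conj, e3, sub_mul, Complex.sub_im]
      simp
    rw [Finset.sum_congr rfl hfirst, Finset.sum_congr rfl hsecond, Finset.sum_sub_distrib]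
    have h3 : ∑ j ∈ range n, ((starRingEnd ℂ) (P n) * Z j).im = 0 := by
      rw [← Complex.im_sum, ← Finset.mul_sum]
      have : ∑ j ∈ range n, Z j = P n := by rw [hPdef]
      rw [this, mul_comm, Complex.mul_conj]
      simp
    rw [h3, hS₀]
    ring
  -- claim D
  have claimD : ∑ k ∈ range (2*n), Complex.normSq (w (k+1) - w k)
      = 2 * ∑ k ∈ range n, Complex.normSq (Z k) := by
    rw [hsplit]
    have hfirst : ∀ k ∈ range n, Complex.normSq (w (k+1) - w k) = Complex.normSq (Z k) := by
      intro k hk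
      have hkn := mem_range.mp hk
      rw [hwlow k (by omega), hwlow (k+1) (by omega), hPsucc k]
      congr 1
      ring
    have hsecond : ∀ j ∈ range n, Complex.normSq (w (n+j+1) - w (n+j))
        = Complex.normSq (Z j) := by
      intro j hj
      have hjn := mem_range.mp hj
      have e1 : n + j + 1 = n + (j + 1) := by ring
      rw [e1, hwhigh j (by omega), hwhigh (j+1) (by omega), hPsucc j]
      rw [show P n - (P j + Z j) - (P n - P j) = -(Z j) by ring, Complex.normSq_neg]
    rw [Finset.sum_congr rfl hfirst, Finset.sum_congr rfl hsecond]
    ring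
  -- apply Wirtinger
  have hWir := wirtinger (2*n) (by omega) w hw2n
  rw [claimC, claimD, claimB] at hWir
  have hcast : ((2*n : ℕ) : ℝ) = 2 * (n : ℝ) := by push_cast; ring
  rw [hcast] at hWir
  rw [step1, step2, step3, claimA]
  linarith
end

section
/- Let n ≥ 2 and define u, v ∈ ℝ^n by u_i = √(2/n)·cos((i−1)π/n) and v_i = √(2/n)·sin((i−1)π/n) for i = 1, …, n. Then u and v are orthonormal (‖u‖₂ = ‖v‖₂ = 1 and ⟨u, v⟩ = 0) and ∑_{1 ≤ i < j ≤ n} |u_i v_j − u_j v_i| = cot(π/(2n)). -/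
open Finset Real

lemma aux_roots (n : ℕ) (hn : 2 ≤ n) :
    ∑ k ∈ range n, Complex.exp ((2 * π * k / n : ℝ) * Complex.I) = 0 := by
  have hn0 : (0:ℝ) < n := by positivity
  have hnne : (n:ℂ) ≠ 0 := by exact_mod_cast hn0.ne'
  set z : ℂ := Complex.exp ((2 * π / n : ℝ) * Complex.I) with hz
  have hzk : ∀ k : ℕ, Complex.exp ((2 * π * k / n : ℝ) * Complex.I) = z ^ k := by
    intro k
    rw [hz, ← Complex.exp_nat_mul]
    congr 1
    push_cast
    ring
  have hz1 : z ≠ 1 := by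
    intro h
    have hre : Real.cos (2 * π / n) = 1 := by
      have := congrArg Complex.re h
      rwa [Complex.exp_ofReal_mul_I_re] at this
    have hn2 : (2:ℝ) ≤ n := by exact_mod_cast hn
    have hlt : 2 * π / n < 2 * π := by
      rw [div_lt_iff₀ hn0]
      nlinarith [Real.pi_pos]
    have hpos : (0:ℝ) < 2 * π / n := by positivity
    have hgt : -(2 * π) < 2 * π / n := by nlinarith [Real.pi_pos]
    have := (Real.cos_eq_one_iff_of_lt_of_lt hgt hlt).1 hre
    linarith
  have hzn : z ^ n = 1 := by
    rw [hz, ← Complex.exp_nat_mul]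
    rw [show (n : ℂ) * ((2 * π / n : ℝ) * Complex.I) = 2 * π * Complex.I by
      push_cast; field_simp]
    exact Complex.exp_two_pi_mul_I
  simp_rw [hzk]
  rw [geom_sum_eq hz1, hzn]
  simp

lemma aux_sin_sum (n : ℕ) (hn : 2 ≤ n) :
    ∑ k ∈ range n, Real.sin (k * π / n) = Real.cot (π / (2 * n)) := by
  have hn0 : (0:ℝ) < n := by positivity
  have hn2 : (2:ℝ) ≤ n := by exact_mod_cast hn
  have hnne : (n:ℂ) ≠ 0 := by exact_mod_cast hn0.ne'
  have hpi2n : π * 2 ≤ π * n := mul_le_mul_of_nonneg_left hn2 Real.pi_pos.le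
  set β : ℝ := π / (2 * n) with hβ
  have hβpos : 0 < β := by positivity
  have hβlt : β < π := by
    rw [hβ, div_lt_iff₀ (by positivity)]
    nlinarith [Real.pi_pos]
  have hs : Real.sin β ≠ 0 := ne_of_gt (Real.sin_pos_of_pos_of_lt_pi hβpos hβlt)
  set z : ℂ := Complex.exp ((π / n : ℝ) * Complex.I) with hz
  have hzk : ∀ k : ℕ, Complex.exp ((k * π / n : ℝ) * Complex.I) = z ^ k := by
    intro k
    rw [hz, ← Complex.exp_nat_mul]
    congr 1
    push_cast
    ring
  have hz1 : z ≠ 1 := by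
    intro h
    have him : Real.sin (π / n) = 0 := by
      have := congrArg Complex.im h
      rwa [Complex.exp_ofReal_mul_I_im] at this
    have : 0 < Real.sin (π / n) := by
      apply Real.sin_pos_of_pos_of_lt_pi (by positivity)
      rw [div_lt_iff₀ hn0]
      nlinarith [Real.pi_pos]
    linarith
  have hzn : z ^ n = -1 := by
    rw [hz, ← Complex.exp_nat_mul]
    rw [show (n : ℂ) * ((π / n : ℝ) * Complex.I) = π * Complex.I by
      push_cast; field_simp]
    exact Complex.exp_pi_mul_I
  set s : ℝ := Real.sin β with hsd
  set c : ℝ := Real.cos β with hcd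
  have h2c : Real.cos (2 * β) = 1 - 2 * s ^ 2 := by
    rw [Real.cos_two_mul]; nlinarith [Real.sin_sq_add_cos_sq β]
  have h2s : Real.sin (2 * β) = 2 * s * c := Real.sin_two_mul β
  have hsC : (s : ℂ) ≠ 0 := by exact_mod_cast hs
  have hzeq : z = (Real.cos (2*β) : ℂ) + (Real.sin (2*β) : ℂ) * Complex.I := by
    rw [hz, Complex.exp_mul_I]
    have : (π / n : ℝ) = 2 * β := by rw [hβ]; field_simp
    rw [this]
    push_cast
    ring
  have hpyC : (s : ℂ) ^ 2 + (c : ℂ) ^ 2 = 1 := by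
    exact_mod_cast Real.sin_sq_add_cos_sq β
  have key2 : (z - 1) * ((s : ℂ) + (c : ℂ) * Complex.I)
      = -2 * (s : ℂ) := by
    rw [hzeq, h2c, h2s]
    push_cast
    linear_combination (2*(s:ℂ)*(c:ℂ)^2) * Complex.I_sq + (-2*(s:ℂ)) * hpyC
  have key : ∑ k ∈ range n, z ^ k = 1 + (Real.cot β : ℂ) * Complex.I := by
    rw [geom_sum_eq hz1, hzn, div_eq_iff (sub_ne_zero.2 hz1),
      Real.cot_eq_cos_div_sin, ← hsd, ← hcd, Complex.ofReal_div]
    field_simp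
    linear_combination -key2
  have himg := congrArg Complex.im key
  rw [Complex.im_sum] at himg
  simp only [← hzk, Complex.exp_ofReal_mul_I_im] at himg
  simp only [Complex.add_im, Complex.one_im, Complex.mul_I_im, Complex.ofReal_re, zero_add] at himg
  simpa using himg

lemma aux_roots' (n : ℕ) (hn : 2 ≤ n) :
    (∑ k ∈ range n, Real.cos (2 * π * k / n) = 0) ∧
    (∑ k ∈ range n, Real.sin (2 * π * k / n) = 0) := by
  have h := aux_roots n hn
  constructor
  · have := congrArg Complex.re h
    rw [Complex.re_sum] at this
    simpa only [Complex.exp_ofReal_mul_I_re, Complex.zero_re] using this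
  · have := congrArg Complex.im h
    rw [Complex.im_sum] at this
    simpa only [Complex.exp_ofReal_mul_I_im, Complex.zero_im] using this

lemma aux_count (n : ℕ) (f : ℕ → ℝ) :
    ∑ i ∈ range n, ∑ j ∈ Ico (i+1) n, f (j - i)
      = ∑ d ∈ range n, ((n:ℝ) - 1 - d) * f (d+1) := by
  have step1 : ∀ i, ∑ j ∈ Ico (i+1) n, f (j - i)
      = ∑ d ∈ range n, if d < n - i - 1 then f (d+1) else 0 := by
    intro i
    rw [Finset.sum_Ico_eq_sum_range]
    rw [← Finset.sum_filter]
    have h1 : (range n).filter (fun d => d < n - i - 1) = range (n - i - 1) := by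
      ext a; simp; omega
    rw [h1, show n - (i+1) = n - i - 1 by omega]
    exact Finset.sum_congr rfl fun d _ => by congr 1; omega
  simp_rw [step1]
  rw [Finset.sum_comm]
  apply Finset.sum_congr rfl
  intro d hd
  have hdn : d < n := Finset.mem_range.1 hd
  have step2 : ∀ i ∈ range n, (if d < n - i - 1 then f (d+1) else 0)
      = (if i < n - d - 1 then f (d+1) else 0) :=
    fun i _ => if_congr (by omega) rfl rfl
  rw [Finset.sum_congr rfl step2, ← Finset.sum_filter]
  have h2 : (range n).filter (fun i => i < n - d - 1) = range (n - d - 1) := by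
    ext a; simp; omega
  rw [h2, Finset.sum_const, card_range, nsmul_eq_mul]
  congr 1
  rw [show n - d - 1 = n - (d+1) by omega, Nat.cast_sub (by omega)]
  push_cast
  ring

lemma aux_reflect (n : ℕ) (hn : 2 ≤ n) :
    ∑ d ∈ range n, ((n:ℝ) - 1 - d) * Real.sin (((d:ℕ)+1) * π / n)
      = (n / 2) * ∑ k ∈ range n, Real.sin (k * π / n) := by
  have hn0 : (0:ℝ) < n := by positivity
  set f : ℕ → ℝ := fun k => Real.sin (k * π / n) with hf
  have hf0 : f 0 = 0 := by simp [hf]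
  have hfn : f n = 0 := by
    simp only [hf]
    rw [show (n:ℝ) * π / n = π by field_simp]
    exact Real.sin_pi
  have hrefl : ∀ j, j < n → f (n - 1 - j) = f (j + 1) := by
    intro j hj
    simp only [hf]
    rw [show ((n - 1 - j : ℕ) : ℝ) = (n:ℝ) - 1 - j by
      rw [show n - 1 - j = n - (j+1) by omega, Nat.cast_sub (by omega)]; push_cast; ring]
    rw [show ((n:ℝ) - 1 - j) * π / n = π - (((j:ℕ)+1:ℕ) * π / n) by push_cast; field_simp; ring]
    exact Real.sin_pi_sub _
  set S2 : ℝ := ∑ k ∈ range n, (k : ℝ) * f k with hS2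
  have hcast : ∀ j, j < n → ((n - 1 - j : ℕ) : ℝ) = (n:ℝ) - 1 - j := by
    intro j hj
    rw [show n - 1 - j = n - (j+1) by omega, Nat.cast_sub (by omega)]; push_cast; ring
  -- S2 equals the LHS by reflection
  have e1 : S2 = ∑ d ∈ range n, ((n:ℝ) - 1 - d) * f (d + 1) := by
    rw [hS2, ← Finset.sum_range_reflect (fun k => (k:ℝ) * f k) n]
    apply Finset.sum_congr rfl
    intro j hj
    have hjn := Finset.mem_range.1 hj
    rw [hcast j hjn, hrefl j hjn]
  -- S1 := sum (n-k) f k equals S2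
  have e2 : ∑ k ∈ range n, ((n:ℝ) - k) * f k = S2 := by
    rw [← Finset.sum_range_reflect (fun k => ((n:ℝ) - k) * f k) n]
    have : ∀ j ∈ range n, ((n:ℝ) - ((n - 1 - j : ℕ):ℝ)) * f (n - 1 - j)
        = ((j:ℝ) + 1) * f (j + 1) := by
      intro j hj
      have hjn := Finset.mem_range.1 hj
      rw [hcast j hjn, hrefl j hjn]
      ring_nf
    rw [Finset.sum_congr rfl this]
    have : ∑ j ∈ range n, ((j:ℝ) + 1) * f (j + 1)
        = ∑ k ∈ range (n+1), (k:ℝ) * f k := by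
      rw [Finset.sum_range_succ' (fun k => (k:ℝ) * f k) n]
      push_cast
      simp [hf0]
    rw [this, Finset.sum_range_succ, hfn, hS2]
    simp
  -- conclude
  have e3 : ∑ k ∈ range n, ((n:ℝ) - k) * f k + S2 = (n:ℝ) * ∑ k ∈ range n, f k := by
    rw [hS2, ← Finset.sum_add_distrib, Finset.mul_sum]
    apply Finset.sum_congr rfl
    intro k _
    ring
  have : (2:ℝ) * S2 = (n:ℝ) * ∑ k ∈ range n, f k := by
    rw [← e3, e2]; ring
  calc ∑ d ∈ range n, ((n:ℝ) - 1 - d) * Real.sin (((d:ℕ)+1) * π / n)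
      = S2 := by rw [e1]; apply Finset.sum_congr rfl; intro d _; simp [hf]
    _ = (n / 2) * ∑ k ∈ range n, Real.sin (k * π / n) := by
        rw [show (n/2 : ℝ) * ∑ k ∈ range n, Real.sin (k * π / n)
            = ((n:ℝ) * ∑ k ∈ range n, f k) / 2 by rw [hf]; ring]
        rw [← this]; ring

theorem stmt_15 (n : ℕ) (hn : 2 ≤ n)
    (u v : Fin n → ℝ)
    (hu_def : ∀ i, u i = Real.sqrt (2 / n) * Real.cos ((i : ℕ) * π / n))
    (hv_def : ∀ i, v i = Real.sqrt (2 / n) * Real.sin ((i : ℕ) * π / n)) :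
    (∑ j, (u j) ^ 2 = 1) ∧ (∑ j, (v j) ^ 2 = 1) ∧ (∑ j, u j * v j = 0) ∧
      ∑ i, ∑ j ∈ Finset.Ioi i, |u i * v j - u j * v i| = Real.cot (π / (2 * n)) := by
  have hn0 : (0:ℝ) < n := by positivity
  have h2n : (0:ℝ) ≤ 2 / n := by positivity
  obtain ⟨hcos2, hsin2⟩ := aux_roots' n hn
  refine ⟨?_, ?_, ?_, ?_⟩
  · calc ∑ j : Fin n, u j ^ 2
        = ∑ j ∈ range n, (2/(n:ℝ)) * (1/2 + Real.cos (2*π*j/n)/2) := by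
          rw [← Fin.sum_univ_eq_sum_range (fun j => (2/(n:ℝ)) * (1/2 + Real.cos (2*π*j/n)/2)) n]
          apply Finset.sum_congr rfl
          intro j _
          rw [hu_def, mul_pow, Real.sq_sqrt h2n, Real.cos_sq,
            show (2:ℝ)*((j:ℝ)*π/n) = 2*π*j/n by ring]
      _ = 1 := by
          rw [← Finset.mul_sum, Finset.sum_add_distrib, Finset.sum_const, card_range,
            ← Finset.sum_div, hcos2, nsmul_eq_mul]
          field_simp
          simp
  · calc ∑ j : Fin n, v j ^ 2
        = ∑ j ∈ range n, (2/(n:ℝ)) * (1/2 - Real.cos (2*π*j/n)/2) := by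
          rw [← Fin.sum_univ_eq_sum_range (fun j => (2/(n:ℝ)) * (1/2 - Real.cos (2*π*j/n)/2)) n]
          apply Finset.sum_congr rfl
          intro j _
          rw [hv_def, mul_pow, Real.sq_sqrt h2n, Real.sin_sq_eq_half_sub,
            show (2:ℝ)*((j:ℝ)*π/n) = 2*π*j/n by ring]
      _ = 1 := by
          rw [← Finset.mul_sum, Finset.sum_sub_distrib, Finset.sum_const, card_range,
            ← Finset.sum_div, hcos2, nsmul_eq_mul]
          field_simp
          simp
  · calc ∑ j : Fin n, u j * v j
        = ∑ j ∈ range n, (2/(n:ℝ)) * (Real.sin (2*π*j/n)/2) := by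
          rw [← Fin.sum_univ_eq_sum_range (fun j => (2/(n:ℝ)) * (Real.sin (2*π*j/n)/2)) n]
          apply Finset.sum_congr rfl
          intro j _
          rw [hu_def, hv_def,
            show Real.sqrt (2/n) * Real.cos ((j:ℝ)*π/n) * (Real.sqrt (2/n) * Real.sin ((j:ℝ)*π/n))
              = (Real.sqrt (2/n) * Real.sqrt (2/n)) * (Real.cos ((j:ℝ)*π/n) * Real.sin ((j:ℝ)*π/n)) by ring,
            Real.mul_self_sqrt h2n,
            show Real.cos ((j:ℝ)*π/n) * Real.sin ((j:ℝ)*π/n) = Real.sin (2*((j:ℝ)*π/n))/2 by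
              rw [Real.sin_two_mul]; ring,
            show (2:ℝ)*((j:ℝ)*π/n) = 2*π*j/n by ring]
      _ = 0 := by
          rw [← Finset.mul_sum, ← Finset.sum_div, hsin2]
          simp
  · 
    have hACount : ∑ i ∈ range n, ∑ j ∈ Ico (i+1) n, Real.sin (((j - i : ℕ):ℝ) * π / n)
        = ∑ d ∈ range n, ((n:ℝ) - 1 - d) * Real.sin (((d:ℕ)+1) * π / n) := by
      have h := aux_count n (fun k => Real.sin ((k:ℝ) * π / n))
      push_cast at h ⊢
      exact h
    have hARefl := aux_reflect n hn
    have hASin := aux_sin_sum n hn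
    have hn0 : (0:ℝ) < n := by positivity
    have h2n : (0:ℝ) ≤ 2 / n := by positivity
    calc ∑ i : Fin n, ∑ j ∈ Finset.Ioi i, |u i * v j - u j * v i|
        = ∑ i : Fin n, ∑ j ∈ Finset.Ioi i, (2/(n:ℝ)) * Real.sin (((j.1 - i.1 : ℕ):ℝ) * π / n) := by
          apply Finset.sum_congr rfl
          intro i _
          apply Finset.sum_congr rfl
          intro j hj
          have hij : i < j := Finset.mem_Ioi.1 hj
          have hijn : (i:ℕ) < (j:ℕ) := hij
          have hkey : u i * v j - u j * v i
              = (2/(n:ℝ)) * Real.sin (((j.1 - i.1 : ℕ):ℝ) * π / n) := by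
            rw [hu_def, hv_def, hu_def, hv_def]
            rw [show Real.sqrt (2/n) * Real.cos ((i:ℕ) * π / n) * (Real.sqrt (2/n) * Real.sin ((j:ℕ) * π / n))
                - Real.sqrt (2/n) * Real.cos ((j:ℕ) * π / n) * (Real.sqrt (2/n) * Real.sin ((i:ℕ) * π / n))
                = (Real.sqrt (2/n) * Real.sqrt (2/n)) *
                  (Real.sin ((j:ℕ) * π / n) * Real.cos ((i:ℕ) * π / n)
                    - Real.cos ((j:ℕ) * π / n) * Real.sin ((i:ℕ) * π / n)) by ring,
              Real.mul_self_sqrt h2n, ← Real.sin_sub]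
            congr 1
            rw [Nat.cast_sub hijn.le]
            ring
          rw [hkey]
          have h1k : 1 ≤ j.1 - i.1 := by omega
          have hkn : j.1 - i.1 < n := by omega
          have hpos : 0 < Real.sin (((j.1 - i.1 : ℕ):ℝ) * π / n) := by
            apply Real.sin_pos_of_pos_of_lt_pi
            · have : (1:ℝ) ≤ ((j.1 - i.1 : ℕ):ℝ) := by exact_mod_cast h1k
              have := Real.pi_pos
              positivity
            · rw [div_lt_iff₀ hn0]
              have hc : ((j.1 - i.1 : ℕ):ℝ) < n := by exact_mod_cast hkn
              nlinarith [Real.pi_pos]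
          rw [abs_of_pos (by positivity)]
      _ = ∑ i ∈ range n, ∑ j ∈ Ico (i+1) n, (2/(n:ℝ)) * Real.sin (((j - i : ℕ):ℝ) * π / n) := by
          rw [← Fin.sum_univ_eq_sum_range
            (fun i => ∑ j ∈ Ico (i+1) n, (2/(n:ℝ)) * Real.sin (((j - i : ℕ):ℝ) * π / n)) n]
          apply Finset.sum_congr rfl
          intro i _
          rw [show Ico ((i:ℕ)+1) n = Ioo (i:ℕ) n by ext a; simp]
          rw [← Fin.map_valEmbedding_Ioi, Finset.sum_map]
          rfl
      _ = (2/(n:ℝ)) * ∑ i ∈ range n, ∑ j ∈ Ico (i+1) n, Real.sin (((j - i : ℕ):ℝ) * π / n) := by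
          rw [Finset.mul_sum]
          exact Finset.sum_congr rfl fun i _ => by rw [Finset.mul_sum]
      _ = (2/(n:ℝ)) * ((n / 2) * ∑ k ∈ range n, Real.sin (k * π / n)) := by
          rw [hACount, hARefl]
      _ = Real.cot (π / (2 * n)) := by
          rw [hASin]
          field_simp
end

section
/- Let n ≥ 2 and let u, v ∈ ℝ^n be unit vectors with ⟨u, v⟩ = 0. Then ∑_{1 ≤ i < j ≤ n} |u_i v_j − u_j v_i| ≥ 1, with equality when u and v are two distinct standard basis vectors of ℝ^n. -/
/-! By Lagrange's identity the squared minors `u i * v j - u j * v i` (`i < j`) sum to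
`‖u‖² ‖v‖² - ⟪u, v⟫² = 1`. Hence every minor has absolute value at most `1` and so dominates its
square. For two distinct standard basis vectors every minor lies in `{-1, 0, 1}`, where the absolute
value equals the square, so the sum is exactly `1`. -/

open Finset

namespace Finset

variable {ι : Type*} [Fintype ι] [LinearOrder ι] [LocallyFiniteOrderTop ι]
  [LocallyFiniteOrderBot ι]

theorem sum_sum_Ioi_mul_sub_mul_sq {R : Type*} [CommRing R] (f g : ι → R) :
    ∑ i, ∑ j ∈ Ioi i, (f i * g j - f j * g i) ^ 2
      = (∑ i, f i ^ 2) * (∑ i, g i ^ 2) - (∑ i, f i * g i) ^ 2 := by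
  set F : ι → ι → R := fun j i => f j ^ 2 * g i ^ 2 - f j * g j * (f i * g i)
  have hsplit : ∀ i j, (f i * g j - f j * g i) ^ 2 = F j i + F i j := fun i j => by ring
  have hdiag : ∀ i, ∑ j ∈ {i}ᶜ, F j i = ∑ j, F j i := fun i => by
    rw [← sum_compl_add_sum {i}, sum_singleton]
    simp only [F]
    ring
  simp_rw [hsplit, sum_sum_Ioi_add_eq_sum_sum_off_diag, hdiag, F, sum_sub_distrib, ← sum_mul,
    ← mul_sum, sq]

theorem sum_sq_le_sum_abs_of_sum_sq_le_one {κ : Type*} (s : Finset κ) (x : κ → ℝ)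
    (hx : ∑ k ∈ s, x k ^ 2 ≤ 1) : ∑ k ∈ s, x k ^ 2 ≤ ∑ k ∈ s, |x k| := by
  refine sum_le_sum fun k hk => ?_
  have hsq : x k ^ 2 ≤ 1 :=
    (single_le_sum (f := fun k => x k ^ 2) (fun _ _ => sq_nonneg _) hk).trans hx
  have habs : |x k| ≤ 1 := abs_le_one_iff_mul_self_le_one.mpr (by nlinarith)
  calc x k ^ 2 = |x k| * |x k| := by rw [← sq_abs, sq]
    _ ≤ |x k| := mul_le_of_le_one_right (abs_nonneg _) habs

end Finset

theorem IsIdempotentElem.abs_sub_eq_sq {a b : ℝ} (ha : IsIdempotentElem a)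
    (hb : IsIdempotentElem b) : |a - b| = (a - b) ^ 2 := by
  rcases IsIdempotentElem.iff_eq_zero_or_one.mp ha with rfl | rfl <;>
    rcases IsIdempotentElem.iff_eq_zero_or_one.mp hb with rfl | rfl <;> norm_num

theorem isIdempotentElem_single_one_apply {ι R : Type*} [DecidableEq ι] [MulZeroOneClass R]
    (p i : ι) : IsIdempotentElem ((Pi.single p (1 : R) : ι → R) i) := by
  rw [Pi.single_apply]
  split_ifs
  exacts [IsIdempotentElem.one, IsIdempotentElem.zero]

theorem stmt_16_general (n : ℕ) (u v : Fin n → ℝ)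
    (hu : ∑ j, (u j) ^ 2 = 1) (hv : ∑ j, (v j) ^ 2 = 1) (huv : ∑ j, u j * v j = 0) :
    1 ≤ ∑ i, ∑ j ∈ Finset.Ioi i, |u i * v j - u j * v i| ∧
      ∀ p q : Fin n, p ≠ q →
        ∀ e f : Fin n → ℝ, e = Pi.single p 1 → f = Pi.single q 1 →
          ∑ i, ∑ j ∈ Finset.Ioi i, |e i * f j - e j * f i| = 1 := by
  constructor
  · have hlag : ∑ i, ∑ j ∈ Ioi i, (u i * v j - u j * v i) ^ 2 = 1 := by
      rw [sum_sum_Ioi_mul_sub_mul_sq, hu, hv, huv]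
      norm_num
    rw [sum_sigma'] at hlag ⊢
    exact hlag ▸ sum_sq_le_sum_abs_of_sum_sq_le_one _ _ hlag.le
  · intro p q hpq e f he hf
    have he' : ∀ i, IsIdempotentElem (e i) := he ▸ isIdempotentElem_single_one_apply p
    have hf' : ∀ i, IsIdempotentElem (f i) := hf ▸ isIdempotentElem_single_one_apply q
    have habs : ∀ i j, |e i * f j - e j * f i| = (e i * f j - e j * f i) ^ 2 := fun i j =>
      ((he' i).mul (hf' j)).abs_sub_eq_sq ((he' j).mul (hf' i))
    simp_rw [habs, sum_sum_Ioi_mul_sub_mul_sq, he, hf]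
    simp [Pi.single_apply, hpq.symm]

theorem stmt_16 (n : ℕ) (hn : 2 ≤ n) (u v : Fin n → ℝ)
    (hu : ∑ j, (u j) ^ 2 = 1) (hv : ∑ j, (v j) ^ 2 = 1) (huv : ∑ j, u j * v j = 0) :
    1 ≤ ∑ i, ∑ j ∈ Finset.Ioi i, |u i * v j - u j * v i| ∧
      ∀ p q : Fin n, p ≠ q →
        ∀ e f : Fin n → ℝ, e = Pi.single p 1 → f = Pi.single q 1 →
          ∑ i, ∑ j ∈ Finset.Ioi i, |e i * f j - e j * f i| = 1 :=
  stmt_16_general n u v hu hv huv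
end
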